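/- arXiv:1509.00462 — 6 statements merged into one kernel-verified Lean document; each statement's English description precedes it below -/
import Mathlib

section
/- The number of sequences of pairs $(p_1,r_1),\ldots,(p_k,r_k)$ of positive integers (including the empty sequence) satisfying $r_i \le p_i \le n$ for all $i$, $p_1 < p_2 < \cdots < p_k$, and $p_1 - r_1 < p_2 - r_2 < \cdots < p_k - r_k$, is the Catalan number $C_{n+1}$. -/
/-- A run-encoding of an nTL-monomial for the path `Pₙ`: a list of pairs
`(pᵢ, rᵢ)` with `1 ≤ rᵢ ≤ pᵢ ≤ n`, strictly increasing peaks `pᵢ`, and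
strictly increasing valleys (equivalently `pᵢ - rᵢ` strictly increasing). -/
def RunEnc (n : ℕ) (s : List (ℕ × ℕ)) : Prop :=
  (∀ pr ∈ s, 1 ≤ pr.2 ∧ pr.2 ≤ pr.1 ∧ pr.1 ≤ n) ∧
  List.Chain' (· < ·) (s.map Prod.fst) ∧
  List.Chain' (· < ·) (s.map fun pr => pr.1 - pr.2)

namespace RunEncProof

open List

/-- Pairwise version of `RunEnc`. -/
def RunP (n : ℕ) (s : List (ℕ × ℕ)) : Prop :=
  (∀ pr ∈ s, 1 ≤ pr.2 ∧ pr.2 ≤ pr.1 ∧ pr.1 ≤ n) ∧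
  s.Pairwise (fun x y => x.1 < y.1) ∧
  s.Pairwise (fun x y => x.1 - x.2 < y.1 - y.2)

lemma runEnc_iff {n : ℕ} {s : List (ℕ × ℕ)} : RunEnc n s ↔ RunP n s := by
  unfold RunEnc RunP
  simp only [List.Chain', List.isChain_iff_pairwise, List.pairwise_map]

def shiftUp (pr : ℕ × ℕ) : ℕ × ℕ := (pr.1 + 1, pr.2 + 1)

def shiftR (m : ℕ) (pr : ℕ × ℕ) : ℕ × ℕ := (pr.1 + m, pr.2)

lemma shiftUp_inj : Function.Injective shiftUp := by
  intro a b h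
  simp only [shiftUp, Prod.mk.injEq] at h
  exact Prod.ext (by omega) (by omega)

lemma shiftR_inj (m : ℕ) : Function.Injective (shiftR m) := by
  intro a b h
  simp only [shiftR, Prod.mk.injEq] at h
  exact Prod.ext (by omega) h.2

/-- The list encoding of a tree. -/
def toL : BinaryTree Unit → List (ℕ × ℕ)
  | BinaryTree.nil => []
  | BinaryTree.node _ a BinaryTree.nil => (toL a).map shiftUp
  | BinaryTree.node _ a (BinaryTree.node x c d) =>
      (toL a).map shiftUp ++
        (a.numNodes + 1, 1) :: (toL (BinaryTree.node x c d)).map (shiftR (a.numNodes + 1))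

lemma toL_inv (t : BinaryTree Unit) :
    (∀ pr ∈ toL t, 1 ≤ pr.2 ∧ pr.2 ≤ pr.1 ∧ pr.1 + 1 ≤ t.numNodes) ∧
      (toL t).Pairwise (fun x y => x.1 < y.1) ∧
      (toL t).Pairwise (fun x y => x.1 - x.2 < y.1 - y.2) := by
  induction t using toL.induct with
  | case1 => simp [toL]
  | case2 u a ih =>
    obtain ⟨hb, hp, hg⟩ := ih
    simp only [toL, Tree.numNodes, BinaryTree.numNodes]
    refine ⟨?_, ?_, ?_⟩
    · intro pr hpr
      obtain ⟨q, hq, rfl⟩ := List.mem_map.1 hpr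
      have := hb q hq
      simp only [shiftUp]
      omega
    · rw [List.pairwise_map]
      exact hp.imp (by intro x y h; simp only [shiftUp]; omega)
    · rw [List.pairwise_map]
      exact hg.imp (by intro x y h; simp only [shiftUp]; omega)
  | case3 u a x c d ih₁ ih₂ =>
    obtain ⟨hb₁, hp₁, hg₁⟩ := ih₁
    obtain ⟨hb₂, hp₂, hg₂⟩ := ih₂
    simp only [Tree.numNodes, BinaryTree.numNodes] at hb₂
    simp only [toL, Tree.numNodes, BinaryTree.numNodes]
    refine ⟨?_, ?_, ?_⟩
    · intro pr hpr
      rcases List.mem_append.1 hpr with h | h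
      · obtain ⟨q, hq, rfl⟩ := List.mem_map.1 h
        have := hb₁ q hq
        simp only [shiftUp]
        omega
      · rcases List.mem_cons.1 h with rfl | h
        · simp only []
          omega
        · obtain ⟨q, hq, rfl⟩ := List.mem_map.1 h
          have := hb₂ q hq
          simp only [shiftR]
          omega
    · rw [List.pairwise_append]
      refine ⟨?_, ?_, ?_⟩
      · rw [List.pairwise_map]
        exact hp₁.imp (by intro p q h; simp only [shiftUp]; omega)
      · rw [List.pairwise_cons]
        constructor
        · intro y hy
          obtain ⟨q, hq, rfl⟩ := List.mem_map.1 hy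
          have := hb₂ q hq
          simp only [shiftR]
          omega
        · rw [List.pairwise_map]
          exact hp₂.imp (by intro p q h; simp only [shiftR]; omega)
      · intro p hp y hy
        obtain ⟨q, hq, rfl⟩ := List.mem_map.1 hp
        have h1 := hb₁ q hq
        rcases List.mem_cons.1 hy with rfl | hy
        · simp only [shiftUp]
          omega
        · obtain ⟨q', hq', rfl⟩ := List.mem_map.1 hy
          have h2 := hb₂ q' hq'
          simp only [shiftUp, shiftR]
          omega
    · rw [List.pairwise_append]
      refine ⟨?_, ?_, ?_⟩
      · rw [List.pairwise_map]
        exact hg₁.imp (by intro p q h; simp only [shiftUp]; omega)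
      · rw [List.pairwise_cons]
        constructor
        · intro y hy
          obtain ⟨q, hq, rfl⟩ := List.mem_map.1 hy
          have := hb₂ q hq
          simp only [shiftR]
          omega
        · rw [List.pairwise_map]
          exact hg₂.imp_of_mem (by
            intro p q hp hq h
            have := hb₂ p hp
            have := hb₂ q hq
            simp only [shiftR]
            omega)
      · intro p hp y hy
        obtain ⟨q, hq, rfl⟩ := List.mem_map.1 hp
        have h1 := hb₁ q hq
        rcases List.mem_cons.1 hy with rfl | hy
        · simp only [shiftUp]
          omega
        · obtain ⟨q', hq', rfl⟩ := List.mem_map.1 hy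
          have h2 := hb₂ q' hq'
          simp only [shiftUp, shiftR]
          omega

lemma snd_ge_two_of_mem_map_shiftUp {a : BinaryTree Unit} {pr : ℕ × ℕ}
    (h : pr ∈ (toL a).map shiftUp) : 2 ≤ pr.2 := by
  obtain ⟨q, hq, rfl⟩ := List.mem_map.1 h
  have := (toL_inv a).1 q hq
  simp only [shiftUp]
  omega

lemma split_unique {α : Type*} {P : α → Prop} :
    ∀ {l₁ : List α} {x : α} {r₁ l₂ : List α} {y : α} {r₂ : List α},
      (∀ a ∈ l₁, P a) → (∀ a ∈ l₂, P a) → ¬P x → ¬P y →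
      l₁ ++ x :: r₁ = l₂ ++ y :: r₂ → l₁ = l₂ ∧ x = y ∧ r₁ = r₂ := by
  intro l₁
  induction l₁ with
  | nil =>
    intro x r₁ l₂ y r₂ _ h₂ hx hy h
    cases l₂ with
    | nil => simpa using h
    | cons b l₂ =>
      simp only [List.nil_append, List.cons_append, List.cons.injEq] at h
      exact absurd (h.1 ▸ h₂ b (by simp)) hx
  | cons a l₁ ih =>
    intro x r₁ l₂ y r₂ h₁ h₂ hx hy h
    cases l₂ with
    | nil =>
      simp only [List.nil_append, List.cons_append, List.cons.injEq] at h
      exact absurd (h.1.symm ▸ h₁ a (by simp)) hy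
    | cons b l₂ =>
      simp only [List.cons_append, List.cons.injEq] at h
      obtain ⟨rfl, h⟩ := h
      obtain ⟨h1, h2, h3⟩ := ih (fun z hz => h₁ z (List.mem_cons_of_mem _ hz))
        (fun z hz => h₂ z (List.mem_cons_of_mem _ hz)) hx hy h
      exact ⟨by rw [h1], h2, h3⟩

lemma toL_inj : ∀ t₁ : BinaryTree Unit, ∀ t₂ : BinaryTree Unit,
    t₁.numNodes = t₂.numNodes → toL t₁ = toL t₂ → t₁ = t₂ := by
  intro t₁
  induction t₁ using toL.induct with
  | case1 =>
    intro t₂ hn _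
    cases t₂ with
    | nil => rfl
    | node v a b => simp [Tree.numNodes, BinaryTree.numNodes] at hn
  | case2 u a ih =>
    intro t₂ hn hL
    cases t₂ with
    | nil => simp [Tree.numNodes, BinaryTree.numNodes] at hn
    | node v a' b' =>
      cases b' with
      | nil =>
        simp only [toL] at hL
        have ha : toL a = toL a' := List.map_injective_iff.2 shiftUp_inj hL
        simp only [Tree.numNodes, BinaryTree.numNodes] at hn
        have := ih a' (by omega) ha
        cases u; cases v; rw [this]
      | node x' c' d' =>
        exfalso
        simp only [toL] at hL
        have hmem : ((a'.numNodes + 1 : ℕ), (1 : ℕ)) ∈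
            (toL a).map shiftUp := by
          rw [hL]
          exact List.mem_append.2 (Or.inr (List.mem_cons_self))
        have := snd_ge_two_of_mem_map_shiftUp hmem
        omega
  | case3 u a x c d ih₁ ih₂ =>
    intro t₂ hn hL
    cases t₂ with
    | nil => simp [Tree.numNodes, BinaryTree.numNodes] at hn
    | node v a' b' =>
      cases b' with
      | nil =>
        exfalso
        simp only [toL] at hL
        have hmem : ((a.numNodes + 1 : ℕ), (1 : ℕ)) ∈ (toL a').map shiftUp := by
          rw [← hL]
          exact List.mem_append.2 (Or.inr (List.mem_cons_self))
        have := snd_ge_two_of_mem_map_shiftUp hmem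
        omega
      | node x' c' d' =>
        simp only [toL] at hL
        obtain ⟨hA, hsep, hB⟩ := split_unique (P := fun pr : ℕ × ℕ => 2 ≤ pr.2)
          (fun z hz => snd_ge_two_of_mem_map_shiftUp hz)
          (fun z hz => snd_ge_two_of_mem_map_shiftUp hz)
          (by simp) (by simp) hL
        have hm : a.numNodes = a'.numNodes := by
          have := congrArg Prod.fst hsep
          simpa using this
        have ha : a = a' := ih₁ a' hm (List.map_injective_iff.2 shiftUp_inj hA)
        simp only [Tree.numNodes, BinaryTree.numNodes] at hn
        have hb : BinaryTree.node x c d = BinaryTree.node x' c' d' := by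
          apply ih₂
          · simp only [Tree.numNodes, BinaryTree.numNodes]; omega
          · rw [hm] at hB
            exact List.map_injective_iff.2 (shiftR_inj _) hB
        cases u; cases v
        rw [ha, hb]

lemma map_id_of {α : Type*} {f : α → α} :
    ∀ {l : List α}, (∀ a ∈ l, f a = a) → l.map f = l := by
  intro l
  induction l with
  | nil => intro; rfl
  | cons a l ih =>
    intro h
    simp only [List.map_cons, h a (by simp), ih (fun b hb => h b (by simp [hb]))]

lemma exists_first_split {α : Type*} (P : α → Prop) :
    ∀ l : List α, (∃ x ∈ l, P x) →
      ∃ l₁ x l₂, l = l₁ ++ x :: l₂ ∧ P x ∧ ∀ y ∈ l₁, ¬P y := by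
  intro l
  induction l with
  | nil => simp
  | cons a l ihl =>
    intro h
    by_cases ha : P a
    · exact ⟨[], a, l, rfl, ha, by simp⟩
    · obtain ⟨z, hz, hPz⟩ := h
      have hz' : z ∈ l := by
        rcases List.mem_cons.1 hz with rfl | h
        · exact absurd hPz ha
        · exact h
      obtain ⟨l₁, y, l₂, rfl, h1, h2⟩ := ihl ⟨z, hz', hPz⟩
      refine ⟨a :: l₁, y, l₂, rfl, h1, ?_⟩
      intro w hw
      rcases List.mem_cons.1 hw with rfl | hw
      · exact ha
      · exact h2 w hw

lemma toL_surj : ∀ n : ℕ, ∀ s : List (ℕ × ℕ), RunP n s →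
    ∃ t : BinaryTree Unit, t.numNodes = n + 1 ∧ toL t = s := by
  intro n
  induction n using Nat.strong_induction_on with
  | _ n ih =>
    intro s hs
    obtain ⟨hb, hp, hg⟩ := hs
    by_cases hex : ∃ pr ∈ s, pr.2 = 1
    · obtain ⟨l₁, xx, l₂, rfl, hx1, hl₁⟩ := exists_first_split _ s hex
      obtain ⟨m, x2⟩ := xx
      simp only at hx1
      subst hx1
      -- extract pairwise facts
      rw [List.pairwise_append] at hp hg
      obtain ⟨hp₁, hp₂', hpc⟩ := hp
      obtain ⟨hg₁, hg₂', hgc⟩ := hg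
      rw [List.pairwise_cons] at hp₂' hg₂'
      obtain ⟨hpx, hp₂⟩ := hp₂'
      obtain ⟨hgx, hg₂⟩ := hg₂'
      have hbx := hb (m, 1) (by simp)
      have hm1 : 1 ≤ m := by simp at hbx; omega
      have hmn : m ≤ n := by simp at hbx; omega
      have hbl₁ : ∀ y ∈ l₁, 1 ≤ y.2 ∧ y.2 ≤ y.1 ∧ y.1 ≤ n := fun y hy => hb y (by simp [hy])
      have hbl₂ : ∀ y ∈ l₂, 1 ≤ y.2 ∧ y.2 ≤ y.1 ∧ y.1 ≤ n := fun y hy => hb y (by simp [hy])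
      have hl₁lt : ∀ y ∈ l₁, y.1 < m := fun y hy => hpc y hy (m, 1) (by simp)
      have hl₁gap : ∀ y ∈ l₁, y.1 - y.2 < m - 1 := fun y hy => hgc y hy (m, 1) (by simp)
      have hl₂gt : ∀ y ∈ l₂, m < y.1 := fun y hy => hpx y hy
      have hl₂gap : ∀ y ∈ l₂, y.2 + m ≤ y.1 := by
        intro y hy
        have := hgx y hy
        have := hbl₂ y hy
        simp only at *
        omega
      have hl₁2 : ∀ y ∈ l₁, 2 ≤ y.2 := by
        intro y hy
        have h1 := hbl₁ y hy
        have h2 := hl₁ y hy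
        omega
      -- build left tree
      have hleft : ∃ a : BinaryTree Unit, a.numNodes + 1 = m ∧ (toL a).map shiftUp = l₁ := by
        rcases Nat.lt_or_ge m 2 with hm | hm
        · -- m = 1, l₁ = []
          have hl1nil : l₁ = [] := by
            cases l₁ with
            | nil => rfl
            | cons y ys =>
              exfalso
              have h1 := hbl₁ y (by simp)
              have h2 := hl₁lt y (by simp)
              omega
          exact ⟨BinaryTree.nil, by simp [Tree.numNodes, BinaryTree.numNodes]; omega, by simp [toL, hl1nil]⟩
        · obtain ⟨k, rfl⟩ : ∃ k, m = k + 2 := ⟨m - 2, by omega⟩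
          have hu₁ : RunP k (l₁.map (fun q => (q.1 - 1, q.2 - 1))) := by
            refine ⟨?_, ?_, ?_⟩
            · intro pr hpr
              obtain ⟨q, hq, rfl⟩ := List.mem_map.1 hpr
              have h1 := hbl₁ q hq
              have h2 := hl₁lt q hq
              have h3 := hl₁2 q hq
              simp only
              omega
            · rw [List.pairwise_map]
              exact hp₁.imp_of_mem (by
                intro p q hp' hq' h
                have := hbl₁ p hp'
                have := hbl₁ q hq'
                simp only
                omega)
            · rw [List.pairwise_map]
              exact hg₁.imp_of_mem (by
                intro p q hp' hq' h
                have := hbl₁ p hp'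
                have := hbl₁ q hq'
                have := hl₁2 p hp'
                have := hl₁2 q hq'
                simp only
                omega)
          obtain ⟨a, han, haL⟩ := ih k (by omega) _ hu₁
          refine ⟨a, by omega, ?_⟩
          rw [haL, List.map_map]
          apply map_id_of
          intro q hq
          have h1 := hbl₁ q hq
          simp only [Function.comp, shiftUp]
          have : q.1 - 1 + 1 = q.1 := by omega
          have : q.2 - 1 + 1 = q.2 := by omega
          ext <;> simp <;> omega
      obtain ⟨a, han, haL⟩ := hleft
      -- build right tree
      have hu₂ : RunP (n - m) (l₂.map (fun q => (q.1 - m, q.2))) := by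
        refine ⟨?_, ?_, ?_⟩
        · intro pr hpr
          obtain ⟨q, hq, rfl⟩ := List.mem_map.1 hpr
          have h1 := hbl₂ q hq
          have h2 := hl₂gap q hq
          simp only
          omega
        · rw [List.pairwise_map]
          exact hp₂.imp_of_mem (by
            intro p q hp' hq' h
            have := hl₂gt p hp'
            have := hl₂gt q hq'
            simp only
            omega)
        · rw [List.pairwise_map]
          exact hg₂.imp_of_mem (by
            intro p q hp' hq' h
            have := hl₂gap p hp'
            have := hl₂gap q hq'
            simp only
            omega)
      obtain ⟨b, hbn', hbL⟩ := ih (n - m) (by omega) _ hu₂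
      have hbne : b ≠ BinaryTree.nil := by
        intro h
        rw [h] at hbn'
        simp [Tree.numNodes, BinaryTree.numNodes] at hbn'
      cases b with
      | nil => exact absurd rfl hbne
      | node xb cb db =>
        refine ⟨BinaryTree.node () a (BinaryTree.node xb cb db), ?_, ?_⟩
        · simp only [Tree.numNodes, BinaryTree.numNodes] at hbn' ⊢
          omega
        · have hmap : l₂.map ((shiftR m) ∘ (fun q => (q.1 - m, q.2))) = l₂ := by
            apply map_id_of
            intro q hq
            have h2 := hl₂gap q hq
            simp only [Function.comp, shiftR]
            ext <;> simp <;> omega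
          simp only [toL, haL, han, hbL, List.map_map, hmap]
    · push_neg at hex
      cases n with
      | zero =>
        have hsnil : s = [] := by
          cases s with
          | nil => rfl
          | cons y ys =>
            exfalso
            have := hb y (by simp)
            omega
        exact ⟨BinaryTree.node () BinaryTree.nil BinaryTree.nil, by simp [Tree.numNodes, BinaryTree.numNodes], by simp [toL, hsnil]⟩
      | succ k =>
        have h2 : ∀ y ∈ s, 2 ≤ y.2 := by
          intro y hy
          have h1 := hb y hy
          have h2 := hex y hy
          omega
        have hu : RunP k (s.map (fun q => (q.1 - 1, q.2 - 1))) := by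
          refine ⟨?_, ?_, ?_⟩
          · intro pr hpr
            obtain ⟨q, hq, rfl⟩ := List.mem_map.1 hpr
            have := hb q hq
            have := h2 q hq
            simp only
            omega
          · rw [List.pairwise_map]
            exact hp.imp_of_mem (by
              intro p q hp' hq' h
              have := hb p hp'
              have := hb q hq'
              simp only
              omega)
          · rw [List.pairwise_map]
            exact hg.imp_of_mem (by
              intro p q hp' hq' h
              have := hb p hp'
              have := hb q hq'
              have := h2 p hp'
              have := h2 q hq'
              simp only
              omega)
        obtain ⟨a, han, haL⟩ := ih k (by omega) _ hu
        refine ⟨BinaryTree.node () a BinaryTree.nil, ?_, ?_⟩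
        · simp [Tree.numNodes, BinaryTree.numNodes]; omega
        · simp only [toL, haL, List.map_map]
          apply map_id_of
          intro q hq
          have := hb q hq
          simp only [Function.comp, shiftUp]
          ext <;> simp <;> omega

end RunEncProof

theorem stmt_0 (n : ℕ) :
    {s : List (ℕ × ℕ) | RunEnc n s}.ncard = catalan (n + 1) := by
  classical
  have himg : {s : List (ℕ × ℕ) | RunEnc n s} =
      RunEncProof.toL '' {t : BinaryTree Unit | t.numNodes = n + 1} := by
    ext s
    simp only [Set.mem_setOf_eq, Set.mem_image]
    constructor
    · intro h
      obtain ⟨t, ht, hts⟩ := RunEncProof.toL_surj n s (RunEncProof.runEnc_iff.1 h)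
      exact ⟨t, ht, hts⟩
    · rintro ⟨t, ht, rfl⟩
      apply RunEncProof.runEnc_iff.2
      obtain ⟨hb, hp, hg⟩ := RunEncProof.toL_inv t
      exact ⟨fun pr hpr => by have := hb pr hpr; omega, hp, hg⟩
  rw [himg, Set.ncard_image_of_injOn (fun t₁ h₁ t₂ h₂ h =>
    RunEncProof.toL_inj t₁ t₂ (h₁.trans h₂.symm) h)]
  rw [← BinaryTree.coe_treesOfNumNodesEq, Set.ncard_coe_finset,
    BinaryTree.treesOfNumNodesEq_card_eq_catalan]
end

section
/- For every $n \ge 0$ and $d \ge 0$, the number of sequences of pairs $(p_1,r_1),\ldots,(p_k,r_k)$ with $1 \le r_i \le p_i \le n$, strictly increasing $p_i$, strictly increasing $p_i - r_i$, and $\sum_i r_i = d$, equals the number of Dyck paths of length $2(n+1)$ for which the sum of the heights of the peaks minus the number of peaks is $d$. -/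
set_option maxHeartbeats 1000000

def IsDyck (m : ℕ) (w : List Bool) : Prop :=
  w.length = 2 * m ∧ (∀ k, (w.take k).count false ≤ (w.take k).count true) ∧
    w.count false = w.count true

def height (w : List Bool) (k : ℕ) : ℕ :=
  (w.take k).count true - (w.take k).count false

/-- The indices of the up-steps of the peaks of `w`. -/
def peakIdx (w : List Bool) : Finset ℕ :=
  (Finset.range w.length).filter fun i =>
    w[i]? = some true ∧ w[i + 1]? = some false

/-- The sum of the heights of the peaks minus the number of peaks. -/
def dstat (w : List Bool) : ℕ := ∑ i ∈ peakIdx w, (height w (i + 1) - 1)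

namespace Stmt4

abbrev dn (a : ℕ) : List Bool := List.replicate a false
abbrev up (h : ℕ) : List Bool := List.replicate h true
abbrev uds (t : ℕ) : List Bool := (List.replicate t [true, false]).flatten

def seg (u f p r : ℕ) : List Bool :=
  dn (min u (p - r) - f) ++ uds ((p - r) - u) ++ up (p + 1 - max u (p - r))

def fromSeq (m : ℕ) : ℕ → ℕ → List (ℕ × ℕ) → List Bool
  | u, f, [] => dn (u - f) ++ uds (m - u)
  | u, f, (p, r) :: s => seg u f p r ++ fromSeq m (p + 1) (p - r) s

def Good (m : ℕ) : ℕ → ℕ → List (ℕ × ℕ) → Prop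
  | _, _, [] => True
  | u, fb, (p, r) :: s =>
      1 ≤ r ∧ r ≤ p ∧ p < m ∧ u ≤ p ∧ fb ≤ p - r ∧ Good m (p + 1) (p - r + 1) s

def Bal (c : ℕ) (w : List Bool) : Prop :=
  ∀ k, (w.take k).count false ≤ c + (w.take k).count true

def dstatC (c : ℕ) (w : List Bool) : ℕ :=
  ∑ i ∈ peakIdx w, (c + (w.take (i + 1)).count true - (w.take (i + 1)).count false - 1)

@[simp] lemma count_uds_true (t : ℕ) : (uds t).count true = t := by
  induction t with
  | zero => rfl
  | succ t ih => simp [uds, List.replicate_succ] at ih ⊢; simp [ih]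

@[simp] lemma count_uds_false (t : ℕ) : (uds t).count false = t := by
  induction t with
  | zero => rfl
  | succ t ih => simp [uds, List.replicate_succ] at ih ⊢; simp [ih]

@[simp] lemma length_uds (t : ℕ) : (uds t).length = 2 * t := by
  induction t with
  | zero => rfl
  | succ t ih => simp [uds, List.replicate_succ] at ih ⊢; simp [ih]; ring

lemma count_tf (w : List Bool) : w.count true + w.count false = w.length := by
  induction w with
  | nil => simp
  | cons b w ih => cases b <;> simp [ih] <;> omega

lemma dstat_eq (w : List Bool) : dstat w = dstatC 0 w := by
  unfold dstat dstatC height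
  exact Finset.sum_congr rfl (fun i _ => by omega)
lemma peakIdx_cons (b : Bool) (w : List Bool) :
    peakIdx (b :: w) =
      ((peakIdx w).image (· + 1)) ∪
        (if b = true ∧ w.head? = some false then {0} else ∅) := by
  ext i
  cases i with
  | zero =>
    simp only [peakIdx, Finset.mem_filter, Finset.mem_range, Finset.mem_union,
      Finset.mem_image]
    constructor
    · rintro ⟨-, h1, h2⟩
      right
      have : b = true := by simpa using h1
      have h2' : w.head? = some false := by
        cases w with
        | nil => simp at h2
        | cons c w => simpa using h2
      simp [this, h2']
    · rintro (⟨j, hj, hj2⟩ | h)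
      · omega
      · split_ifs at h with hc
        · refine ⟨by simp, by simp [hc.1], ?_⟩
          cases w with
          | nil => simp at hc
          | cons c w => simpa using hc.2
        · simp at h
  | succ j =>
    simp only [peakIdx, Finset.mem_filter, Finset.mem_range, Finset.mem_union,
      Finset.mem_image]
    constructor
    · rintro ⟨h0, h1, h2⟩
      left
      exact ⟨j, ⟨by simpa using h0, by simpa using h1, by simpa using h2⟩, rfl⟩
    · rintro (⟨j', ⟨hj0, hj1, hj2⟩, hj⟩ | h)
      · obtain rfl : j' = j := by omega
        exact ⟨by simpa using hj0, by simpa using hj1, by simpa using hj2⟩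
      · split_ifs at h with hc <;> simp at h

lemma dstatC_sum_shift (c : ℕ) (b : Bool) (w : List Bool) (g : ℕ → ℕ)
    (hg : ∀ i ∈ peakIdx w, (c + ((b :: w).take (i + 1 + 1)).count true
        - ((b :: w).take (i + 1 + 1)).count false - 1) = g i) :
    ∑ i ∈ (peakIdx w).image (· + 1),
      (c + ((b :: w).take (i + 1)).count true - ((b :: w).take (i + 1)).count false - 1)
      = ∑ i ∈ peakIdx w, g i := by
  rw [Finset.sum_image (by intro x _ y _ h; simp only at h; omega)]
  exact Finset.sum_congr rfl hg

lemma dstatC_cons_false (c : ℕ) (w : List Bool) (hc : 1 ≤ c) :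
    dstatC c (false :: w) = dstatC (c - 1) w := by
  unfold dstatC
  rw [peakIdx_cons]
  simp only [Bool.false_eq_true, false_and, if_false, Finset.union_empty]
  apply dstatC_sum_shift
  intro i _
  simp only [List.take_succ_cons, List.count_cons]
  simp
  omega

lemma dstatC_cons_true_false (c : ℕ) (w : List Bool) (hw : w.head? = some false) :
    dstatC c (true :: w) = c + dstatC (c + 1) w := by
  unfold dstatC
  rw [peakIdx_cons]
  simp only [hw, and_self, if_pos, true_and]
  rw [Finset.sum_union (by
    simp only [Finset.disjoint_singleton_right, Finset.mem_image]
    rintro ⟨j, -, hj⟩; omega)]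
  have h0 : (∑ i ∈ ({0} : Finset ℕ),
      (c + ((true :: w).take (i + 1)).count true - ((true :: w).take (i + 1)).count false - 1)) = c := by
    simp
  rw [h0, add_comm]
  congr 1
  apply dstatC_sum_shift
  intro i _
  simp only [List.take_succ_cons, List.count_cons]
  simp
  omega

lemma dstatC_cons_true_nf (c : ℕ) (w : List Bool) (hw : w.head? ≠ some false) :
    dstatC c (true :: w) = dstatC (c + 1) w := by
  unfold dstatC
  rw [peakIdx_cons]
  simp only [true_and, hw, and_false, if_false, Finset.union_empty]
  · apply dstatC_sum_shift
    intro i _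
    simp only [List.take_succ_cons, List.count_cons]
    simp
    omega
lemma take_app (x y : List α) (k : ℕ) :
    (x ++ y).take (x.length + k) = x ++ y.take k := by
  rw [List.take_append]
  congr 1
  · exact List.take_of_length_le (by omega)
  · congr 1; omega

lemma bal_append {c c' : ℕ} {x y : List Bool} (hx : Bal c x)
    (he : c + x.count true = c' + x.count false) (hy : Bal c' y) :
    Bal c (x ++ y) := by
  intro k
  rcases le_or_gt k x.length with h | h
  · rw [List.take_append]
    have : k - x.length = 0 := by omega
    rw [this]
    simpa using hx k
  · have hk : k = x.length + (k - x.length) := by omega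
    rw [hk, take_app]
    have := hy (k - x.length)
    have hxx := hx x.length
    rw [List.take_of_length_le (le_refl _)] at hxx
    simp only [List.count_append]
    omega

lemma bal_drop {c : ℕ} {x y : List Bool} (h : Bal c (x ++ y)) :
    Bal (c + x.count true - x.count false) y := by
  intro k
  have h1 := h (x.length + k)
  rw [take_app] at h1
  have h2 := h x.length
  rw [List.take_append, Nat.sub_self, List.take_zero, List.append_nil,
    List.take_of_length_le (le_refl _)] at h2
  simp only [List.count_append] at h1
  omega

lemma bal_mono {c c' : ℕ} {w : List Bool} (h : Bal c w) (hc : c ≤ c') : Bal c' w :=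
  fun k => le_trans (h k) (by omega)

lemma bal_dn {a c : ℕ} (h : a ≤ c) : Bal c (List.replicate a false) := by
  intro k
  rw [List.take_replicate]
  simp
  omega

lemma bal_up (h c : ℕ) : Bal c (List.replicate h true) := by
  intro k
  rw [List.take_replicate]
  simp [List.count_replicate]

lemma bal_uds (t c : ℕ) : Bal c ((List.replicate t [true, false]).flatten) := by
  induction t with
  | zero => intro k; simp
  | succ t ih =>
    rw [List.replicate_succ, List.flatten_cons]
    refine bal_append (c' := c) ?_ (by simp) ih
    intro k
    match k with
    | 0 => simp
    | 1 => simp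
    | (j+2) => simp [List.take_succ_cons]

-- appended into namespace Stmt4
@[simp] lemma dstatC_nil (c : ℕ) : dstatC c [] = 0 := by
  simp [dstatC, peakIdx]

lemma dstatC_dn (a : ℕ) : ∀ (c : ℕ) (rest : List Bool), a ≤ c →
    dstatC c (dn a ++ rest) = dstatC (c - a) rest := by
  induction a with
  | zero => intro c rest _; simp
  | succ a ih =>
    intro c rest h
    rw [show dn (a + 1) = false :: dn a by simp [dn, List.replicate_succ]]
    rw [List.cons_append, dstatC_cons_false _ _ (by omega), ih (c - 1) rest (by omega)]
    congr 1
    omega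

lemma dstatC_uds (t : ℕ) : ∀ (c : ℕ) (rest : List Bool),
    dstatC c (uds t ++ rest) = t * c + dstatC c rest := by
  induction t with
  | zero => intro c rest; simp [uds]
  | succ t ih =>
    intro c rest
    rw [show uds (t + 1) ++ rest = true :: false :: (uds t ++ rest) by
      simp [uds, List.replicate_succ]]
    rw [dstatC_cons_true_false _ _ (by simp), dstatC_cons_false _ _ (by omega)]
    rw [ih]
    simp
    ring

lemma dstatC_up (h : ℕ) : ∀ (c : ℕ) (rest : List Bool), 1 ≤ h →
    rest.head? = some false →
    dstatC c (up h ++ rest) = (c + h - 1) + dstatC (c + h) rest := by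
  induction h with
  | zero => omega
  | succ h ih =>
    intro c rest _ hr
    rcases Nat.eq_zero_or_pos h with rfl | hpos
    · rw [show up 1 ++ rest = true :: rest by simp]
      rw [dstatC_cons_true_false _ _ hr]
      simp
    · rw [show up (h + 1) = true :: up h by simp [up, List.replicate_succ]]
      rw [List.cons_append, dstatC_cons_true_nf _ _ (by
        cases rest <;> simp [up, List.replicate, List.head?_append] <;>
        · cases h with
          | zero => omega
          | succ h => simp [List.replicate_succ])]
      rw [ih (c + 1) rest hpos hr, show c + 1 + h = c + (h + 1) by omega]

lemma seg_count_true {u f p r : ℕ} (hu : u ≤ p) (hr : r ≤ p) :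
    (seg u f p r).count true = p + 1 - u := by
  simp [seg, List.count_append, List.count_replicate]
  omega

lemma seg_count_false {u f p r : ℕ} (hf : f ≤ u) (hf2 : f ≤ p - r) :
    (seg u f p r).count false = p - r - f := by
  simp [seg, List.count_append, List.count_replicate]
  omega

lemma head_fromSeq {m : ℕ} : ∀ {s u f}, f < u → Good m u (f + 1) s →
    (fromSeq m u f s).head? = some false := by
  intro s
  match s with
  | [] =>
    intro u f h _
    rw [fromSeq]
    rw [List.head?_append]
    have : u - f ≥ 1 := by omega
    cases hh : (u - f) with
    | zero => omega
    | succ k => simp [List.replicate_succ]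
  | (p, r) :: s =>
    intro u f h hg
    obtain ⟨h1, h2, h3, h4, h5, h6⟩ := hg
    rw [fromSeq]
    have ha : 1 ≤ min u (p - r) - f := by omega
    rw [List.head?_append, seg, List.head?_append, List.head?_append]
    cases hh : (min u (p - r) - f) with
    | zero => omega
    | succ k => simp [List.replicate_succ]

lemma counts_fromSeq {m : ℕ} : ∀ {s u f fb}, Good m u fb s → f ≤ u → f ≤ fb → u ≤ m →
    (fromSeq m u f s).count true = m - u ∧ (fromSeq m u f s).count false = m - f := by
  intro s
  match s with
  | [] =>
    intro u f fb _ h1 h2 h3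
    rw [fromSeq]
    constructor <;> simp [List.count_append, List.count_replicate] <;> omega
  | (p, r) :: s =>
    intro u f fb hg h1 h2 h3
    obtain ⟨g1, g2, g3, g4, g5, g6⟩ := hg
    have IH := counts_fromSeq (f := p - r) g6 (by omega) (by omega) (by omega)
    rw [fromSeq]
    rw [List.count_append, List.count_append, IH.1, IH.2,
      seg_count_true (by omega) (by omega), seg_count_false (by omega) (by omega)]
    constructor <;> omega

lemma bal_fromSeq {m : ℕ} : ∀ {s u f fb}, Good m u fb s → f ≤ u → f ≤ fb → u ≤ m →
    Bal (u - f) (fromSeq m u f s) := by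
  intro s
  match s with
  | [] =>
    intro u f fb _ h1 h2 h3
    rw [fromSeq]
    exact bal_append (c' := 0) (bal_dn (le_refl _)) (by simp [List.count_replicate])
      (bal_uds _ _)
  | (p, r) :: s =>
    intro u f fb hg h1 h2 h3
    obtain ⟨g1, g2, g3, g4, g5, g6⟩ := hg
    have IH := bal_fromSeq (f := p - r) g6 (by omega) (by omega) (by omega)
    rw [fromSeq]
    have hseg : Bal (u - f) (seg u f p r) := by
      unfold seg
      rw [List.append_assoc]
      refine bal_append (c' := u - min u (p - r))
        (x := dn (min u (p - r) - f)) (bal_dn (by omega))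
        (by simp [List.count_replicate]; omega) ?_
      exact bal_append (c' := u - min u (p - r)) (bal_uds _ _) (by simp) (bal_up _ _)
    refine bal_append (c' := (p + 1) - (p - r)) hseg ?_ ?_
    · rw [seg_count_true (by omega) (by omega), seg_count_false (by omega) (by omega)]
      omega
    · have : (p + 1) - (p - r) = r + 1 := by omega
      rw [this]
      exact bal_mono IH (by omega)

lemma dstat_fromSeq {m : ℕ} : ∀ {s u f fb}, Good m u fb s → f ≤ u → f ≤ fb → u ≤ m →
    dstatC (u - f) (fromSeq m u f s) = (s.map Prod.snd).sum := by
  intro s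
  match s with
  | [] =>
    intro u f fb _ h1 h2 h3
    rw [fromSeq]
    rw [dstatC_dn _ _ _ (le_refl _), ← List.append_nil (uds (m - u)), dstatC_uds]
    simp
  | (p, r) :: s =>
    intro u f fb hg h1 h2 h3
    obtain ⟨g1, g2, g3, g4, g5, g6⟩ := hg
    have IH := dstat_fromSeq (f := p - r) g6 (by omega) (by omega) (by omega)
    rw [fromSeq]
    set a := min u (p - r) - f with ha
    set t := (p - r) - u with ht
    set h := p + 1 - max u (p - r) with hh
    have hrest : (fromSeq m (p + 1) (p - r) s).head? = some false :=
      head_fromSeq (by omega) g6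
    have hassoc : seg u f p r ++ fromSeq m (p + 1) (p - r) s =
        dn a ++ (uds t ++ (up h ++ fromSeq m (p + 1) (p - r) s)) := by
      simp [seg, List.append_assoc]; rfl
    rw [hassoc]
    rw [dstatC_dn _ _ _ (by omega), dstatC_uds, dstatC_up _ _ _ (by omega) hrest]
    have htc : t * (u - f - a) = 0 := by
      rcases Nat.eq_zero_or_pos t with h0 | h0
      · rw [h0]; ring
      · have : a = u - f := by omega
        rw [this]; simp
    rw [htc]
    have h1' : u - f - a + h - 1 = r := by omega
    have h2' : u - f - a + h = (p + 1) - (p - r) := by omega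
    rw [h1', h2', IH]
    simp

lemma good_iff (m : ℕ) (s : List (ℕ × ℕ)) : ∀ (u fb : ℕ),
    Good m u fb s ↔
      ((∀ pr ∈ s, 1 ≤ pr.2 ∧ pr.2 ≤ pr.1 ∧ pr.1 < m) ∧
       List.Chain' (· < ·) (s.map Prod.fst) ∧
       List.Chain' (· < ·) (s.map fun pr => pr.1 - pr.2) ∧
       (∀ pr ∈ s.head?, u ≤ pr.1 ∧ fb ≤ pr.1 - pr.2)) := by
  induction s with
  | nil => intro u fb; simp [Good, List.Chain']
  | cons hd tl ih =>
    intro u fb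
    obtain ⟨p, r⟩ := hd
    show (1 ≤ r ∧ r ≤ p ∧ p < m ∧ u ≤ p ∧ fb ≤ p - r ∧ Good m (p + 1) (p - r + 1) tl) ↔ _
    constructor
    · rintro ⟨h1, h2, h3, h4, h5, h6⟩
      rw [ih] at h6
      obtain ⟨hA, hB, hC, hD⟩ := h6
      refine ⟨?_, ?_, ?_, ?_⟩
      · intro pr hpr
        rcases List.mem_cons.1 hpr with rfl | hpr
        · exact ⟨h1, h2, h3⟩
        · exact hA pr hpr
      · simp only [List.map_cons, List.Chain', List.isChain_cons]
        refine ⟨?_, hB⟩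
        intro y hy
        rw [List.head?_map] at hy
        rcases htl : tl.head? with _ | q
        · rw [htl] at hy; simp at hy
        · rw [htl] at hy
          have hyq : q.1 = y := by simpa using hy
          have := (hD q (by rw [htl]; rfl)).1
          omega
      · simp only [List.map_cons, List.Chain', List.isChain_cons]
        refine ⟨?_, hC⟩
        intro y hy
        rw [List.head?_map] at hy
        rcases htl : tl.head? with _ | q
        · rw [htl] at hy; simp at hy
        · rw [htl] at hy
          have hyq : q.1 - q.2 = y := by simpa using hy
          have := (hD q (by rw [htl]; rfl)).2
          omega
      · intro pr hpr
        have : (p, r) = pr := by simpa using hpr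
        subst this
        exact ⟨h4, h5⟩
    · rintro ⟨hA, hB, hC, hD⟩
      have h0 := hD (p, r) (by simp)
      have hA0 := hA (p, r) (by simp)
      simp only [List.map_cons, List.Chain', List.isChain_cons] at hB hC
      refine ⟨by simpa using hA0.1, by simpa using hA0.2.1, by simpa using hA0.2.2,
        h0.1, h0.2, ?_⟩
      rw [ih]
      refine ⟨fun pr hpr => hA pr (List.mem_cons_of_mem _ hpr), hB.2, hC.2, ?_⟩
      intro q hq
      have hf := hB.1 q.1 (by rw [List.head?_map, hq]; rfl)
      have hs := hC.1 (q.1 - q.2) (by rw [List.head?_map, hq]; rfl)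
      omega

lemma bal_cons_true {c : ℕ} {w : List Bool} (h : Bal c (true :: w)) : Bal (c + 1) w := by
  intro k
  have := h (k + 1)
  simp only [List.take_succ_cons, List.count_cons] at this
  simp at this
  omega

lemma bal_cons_false {c : ℕ} {w : List Bool} (h : Bal c (false :: w)) :
    1 ≤ c ∧ Bal (c - 1) w := by
  have h1 := h 1
  simp at h1
  refine ⟨h1, fun k => ?_⟩
  have := h (k + 1)
  simp only [List.take_succ_cons, List.count_cons] at this
  simp at this
  omega

lemma head_dn_app {k : ℕ} (hk : 1 ≤ k) (x : List Bool) :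
    (dn k ++ x).head? = some false := by
  cases k with
  | zero => omega
  | succ k => simp [dn, List.replicate_succ]

lemma SL (w : List Bool) : ∀ (c : ℕ), Bal c w → w.count false = c + w.count true →
    (∃ t, w = dn c ++ uds t) ∨
    ∃ a t h rest, w = dn a ++ uds t ++ up h ++ rest ∧ 1 ≤ h ∧ a ≤ c ∧
      (1 ≤ t → a = c) ∧ a + 2 ≤ c + h ∧ rest.head? = some false := by
  induction w with
  | nil =>
    intro c _ hcnt
    simp at hcnt
    left
    exact ⟨0, by simp [hcnt]⟩
  | cons b w' ih =>
    intro c hb hcnt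
    cases b
    · -- b = false
      obtain ⟨hc1, hb'⟩ := bal_cons_false hb
      have hcnt' : w'.count false = (c - 1) + w'.count true := by
        simp [List.count_cons] at hcnt; omega
      rcases ih (c - 1) hb' hcnt' with ⟨t, ht⟩ | ⟨a, t, h, rest, hw, k1, k2, k3, k4, k5⟩
      · left
        refine ⟨t, ?_⟩
        rw [show dn c = false :: dn (c - 1) by
          cases c with
          | zero => omega
          | succ c => simp [dn, List.replicate_succ]]
        simp [ht]
      · right
        refine ⟨a + 1, t, h, rest, ?_, k1, by omega, by omega, by omega, k5⟩
        rw [show dn (a + 1) = false :: dn a by simp [dn, List.replicate_succ]]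
        simp [hw]
    · -- b = true
      have hb' := bal_cons_true hb
      match w' with
      | [] => simp [List.count_cons] at hcnt
      | false :: w₃ =>
        rcases Nat.eq_zero_or_pos c with rfl | hc
        · -- c = 0 : peel a UD
          have hcnt' : (false :: w₃).count false = 1 + (false :: w₃).count true := by
            simp [List.count_cons] at hcnt ⊢; omega
          rcases ih 1 hb' hcnt' with ⟨t, ht⟩ | ⟨a, t, h, rest, hw, k1, k2, k3, k4, k5⟩
          · left
            refine ⟨t + 1, ?_⟩
            have : dn 1 = [false] := rfl
            rw [this] at ht
            simp at ht
            rw [show (uds (t+1) : List Bool) = true :: false :: uds t by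
              simp [uds, List.replicate_succ]]
            simp [ht]
          · rcases Nat.eq_zero_or_pos a with rfl | ha
            · -- a = 0 : contradiction, w' starts with false but rhs starts with true
              exfalso
              have ht0 : t = 0 := by
                by_contra hne
                have := k3 (by omega)
                omega
              subst ht0
              simp [uds] at hw
              have : (false :: w₃).head? = (up h ++ rest).head? := by rw [hw]
              rw [show (up h ++ rest).head? = some true by
                cases h with
                | zero => omega
                | succ h => simp [up, List.replicate_succ]] at this
              simp at this
            · -- a = 1 (a ≤ c' = 1)
              have ha1 : a = 1 := by omega
              subst ha1
              right
              have h2 : 2 ≤ h := by omega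
              refine ⟨0, t + 1, h, rest, ?_, k1, by omega, by omega, by omega, k5⟩
              rw [show (dn 1 : List Bool) = [false] from rfl] at hw
              simp at hw
              rw [show (uds (t+1) : List Bool) = true :: false :: uds t by
                simp [uds, List.replicate_succ]]
              simp [dn, hw]
        · -- c ≥ 1 : single up-step to a tall peak
          right
          exact ⟨0, 0, 1, false :: w₃, by simp [dn, uds, up], le_refl _, by omega,
            by omega, by omega, rfl⟩
      | true :: w₃ =>
        have hcnt' : (true :: w₃).count false = (c + 1) + (true :: w₃).count true := by
          simp [List.count_cons] at hcnt ⊢; omega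
        rcases ih (c + 1) hb' hcnt' with ⟨t, ht⟩ | ⟨a, t, h, rest, hw, k1, k2, k3, k4, k5⟩
        · exfalso
          have : (true :: w₃).head? = (dn (c + 1) ++ uds t).head? := by rw [ht]
          rw [head_dn_app (by omega)] at this
          simp at this
        · rcases Nat.eq_zero_or_pos a with rfl | ha
          · have ht0 : t = 0 := by
              by_contra hne
              have := k3 (by omega)
              omega
            subst ht0
            simp [dn, uds] at hw
            right
            refine ⟨0, 0, h + 1, rest, ?_, by omega, by omega, by omega, by omega, k5⟩
            rw [show (up (h+1) : List Bool) = true :: up h by simp [up, List.replicate_succ]]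
            simp [dn, uds, hw]
          · exfalso
            have : (true :: w₃).head? = (dn a ++ (uds t ++ up h ++ rest)).head? := by
              rw [← List.append_assoc, ← List.append_assoc, hw]
            rw [head_dn_app ha] at this
            simp at this

lemma surj {m : ℕ} : ∀ (N : ℕ) (w : List Bool) (u f fb : ℕ), w.length ≤ N →
    Bal (u - f) w → w.count true = m - u → w.count false = m - f →
    f ≤ u → u ≤ m → (fb ≤ f ∨ (w.head? = some false ∧ fb ≤ f + 1)) →
    ∃ s, Good m u fb s ∧ fromSeq m u f s = w := by
  intro N
  induction N with
  | zero =>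
    intro w u f fb hN _ hct hcf hfu hum _
    have hw : w = [] := by
      cases w with
      | nil => rfl
      | cons b w => simp at hN
    subst hw
    simp at hct hcf
    refine ⟨[], trivial, ?_⟩
    rw [fromSeq]
    have h1 : u - f = 0 := by omega
    have h2 : m - u = 0 := by omega
    rw [h1, h2]
    rfl
  | succ N IH =>
    intro w u f fb hN hb hct hcf hfu hum hfb
    have hcnt : w.count false = (u - f) + w.count true := by omega
    rcases SL w (u - f) hb hcnt with ⟨t, ht⟩ | ⟨a, t, h, rest, hw, k1, k2, k3, k4, k5⟩
    · refine ⟨[], trivial, ?_⟩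
      rw [fromSeq]
      have : t = m - u := by
        have := congrArg (List.count true) ht
        rw [hct] at this
        simp [List.count_append, List.count_replicate] at this
        omega
      rw [ht, this]
    · -- main case
      have hct' : t + h + rest.count true = m - u := by
        have := congrArg (List.count true) hw
        rw [hct] at this
        simp [List.count_append, List.count_replicate] at this
        omega
      have hcf' : a + t + rest.count false = m - f := by
        have := congrArg (List.count true) hw
        have h2 := congrArg (List.count false) hw
        rw [hcf] at h2
        simp [List.count_append, List.count_replicate] at h2
        omega
      set p := u + t + h - 1 with hp
      set r := u + h - (f + a) - 1 with hr
      have hx1 : u + t + h ≤ m := by omega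
      have hx2 : 1 ≤ r := by omega
      have hx3 : r ≤ p := by omega
      have hx4 : p < m := by omega
      have hx5 : u ≤ p := by omega
      have hpr : p - r = f + a + t := by omega
      have hfb' : fb ≤ p - r := by
        rcases hfb with hfb | ⟨hhd, hfb⟩
        · omega
        · have ha1 : 1 ≤ a := by
            by_contra ha0
            have ha0' : a = 0 := by omega
            subst ha0'
            rw [hw] at hhd
            rcases Nat.eq_zero_or_pos t with ht0 | ht1
            · subst ht0
              simp [dn, uds] at hhd
              rcases hhd with hhd | hhd
              · rw [show ((up h).head? : Option Bool) = some true by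
                  cases h with
                  | zero => omega
                  | succ hh => simp [up, List.replicate_succ]] at hhd
                simp at hhd
              · omega
            · rw [show ((dn 0 ++ uds t ++ up h ++ rest).head? : Option Bool) = some true by
                cases t with
                | zero => omega
                | succ tt => simp [dn, uds, List.replicate_succ]] at hhd
              simp at hhd
          omega
      -- balance for rest
      have hbrest : Bal (u - f + ((dn a ++ uds t) ++ up h).count true
          - ((dn a ++ uds t) ++ up h).count false) rest := by
        apply bal_drop
        rw [← hw]  -- w = ((dn a ++ uds t) ++ up h) ++ rest
        exact hb
      have hcx : ((dn a ++ uds t) ++ up h).count true = t + h := by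
        simp [List.count_append, List.count_replicate]
      have hcy : ((dn a ++ uds t) ++ up h).count false = a + t := by
        simp [List.count_append, List.count_replicate]
      rw [hcx, hcy] at hbrest
      have hbal' : Bal ((p + 1) - (p - r)) rest := by
        have : (p + 1) - (p - r) = u - f + (t + h) - (a + t) := by omega
        rw [this]
        exact hbrest
      have hlen : rest.length ≤ N := by
        have := congrArg List.length hw
        rw [List.length_append, List.length_append, List.length_append,
          List.length_replicate, List.length_replicate, length_uds] at this
        omega
      obtain ⟨s', hg', hfs'⟩ := IH rest (p + 1) (p - r) ((p - r) + 1) hlen hbal'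
        (by omega) (by omega) (by omega) (by omega) (Or.inr ⟨k5, le_refl _⟩)
      refine ⟨(p, r) :: s', ⟨hx2, hx3, hx4, hx5, hfb', hg'⟩, ?_⟩
      rw [fromSeq, hfs']
      have e1 : min u (p - r) - f = a := by
        rcases Nat.eq_zero_or_pos t with h0 | h0
        · omega
        · have := k3 h0; omega
      have e2 : (p - r) - u = t := by
        rcases Nat.eq_zero_or_pos t with h0 | h0
        · omega
        · have := k3 h0; omega
      have e3 : p + 1 - max u (p - r) = h := by
        rcases Nat.eq_zero_or_pos t with h0 | h0
        · omega
        · have := k3 h0; omega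
      rw [hw, seg, e1, e2, e3]

lemma dn_succ_app (a : ℕ) (v : List Bool) : dn (a + 1) ++ v = false :: (dn a ++ v) := by
  simp [dn, List.replicate_succ]

lemma up_succ_app (a : ℕ) (v : List Bool) : up (a + 1) ++ v = true :: (up a ++ v) := by
  simp [up, List.replicate_succ]

lemma uds_succ_app (t : ℕ) (v : List Bool) :
    uds (t + 1) ++ v = true :: false :: (uds t ++ v) := by
  simp [uds, List.replicate_succ]

lemma dnPeel : ∀ (a₁ : ℕ) {a₂ : ℕ} {v₁ v₂ : List Bool},
    dn a₁ ++ v₁ = dn a₂ ++ v₂ → v₁.head? ≠ some false → v₂.head? ≠ some false →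
    a₁ = a₂ ∧ v₁ = v₂ := by
  intro a₁
  induction a₁ with
  | zero =>
    intro a₂ v₁ v₂ he h1 h2
    cases a₂ with
    | zero => exact ⟨rfl, by simpa using he⟩
    | succ a₂ =>
      exfalso
      rw [dn_succ_app] at he
      simp only [dn, List.replicate_zero, List.nil_append] at he
      exact h1 (by rw [he]; rfl)
  | succ a₁ ih =>
    intro a₂ v₁ v₂ he h1 h2
    cases a₂ with
    | zero =>
      exfalso
      rw [dn_succ_app] at he
      simp only [dn, List.replicate_zero, List.nil_append] at he
      exact h2 (by rw [← he]; rfl)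
    | succ a₂ =>
      rw [dn_succ_app, dn_succ_app] at he
      injection he with _ he
      obtain ⟨hh, hv⟩ := ih he h1 h2
      exact ⟨by omega, hv⟩

lemma upPeel : ∀ (a₁ : ℕ) {a₂ : ℕ} {v₁ v₂ : List Bool},
    up a₁ ++ v₁ = up a₂ ++ v₂ → v₁.head? ≠ some true → v₂.head? ≠ some true →
    a₁ = a₂ ∧ v₁ = v₂ := by
  intro a₁
  induction a₁ with
  | zero =>
    intro a₂ v₁ v₂ he h1 h2
    cases a₂ with
    | zero => exact ⟨rfl, by simpa using he⟩
    | succ a₂ =>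
      exfalso
      rw [up_succ_app] at he
      simp only [up, List.replicate_zero, List.nil_append] at he
      exact h1 (by rw [he]; rfl)
  | succ a₁ ih =>
    intro a₂ v₁ v₂ he h1 h2
    cases a₂ with
    | zero =>
      exfalso
      rw [up_succ_app] at he
      simp only [up, List.replicate_zero, List.nil_append] at he
      exact h2 (by rw [← he]; rfl)
    | succ a₂ =>
      rw [up_succ_app, up_succ_app] at he
      injection he with _ he
      obtain ⟨hh, hv⟩ := ih he h1 h2
      exact ⟨by omega, hv⟩

lemma udsPeel : ∀ (t₁ : ℕ) {t₂ : ℕ} {z₁ z₂ : List Bool},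
    uds t₁ ++ z₁ = uds t₂ ++ z₂ → z₁[1]? ≠ some false → z₂[1]? ≠ some false →
    t₁ = t₂ ∧ z₁ = z₂ := by
  intro t₁
  induction t₁ with
  | zero =>
    intro t₂ z₁ z₂ he h1 h2
    cases t₂ with
    | zero => exact ⟨rfl, by simpa using he⟩
    | succ t₂ =>
      exfalso
      rw [uds_succ_app] at he
      simp only [uds, List.replicate_zero, List.flatten_nil, List.nil_append] at he
      exact h1 (by rw [he]; rfl)
  | succ t₁ ih =>
    intro t₂ z₁ z₂ he h1 h2
    cases t₂ with
    | zero =>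
      exfalso
      rw [uds_succ_app] at he
      simp only [uds, List.replicate_zero, List.flatten_nil, List.nil_append] at he
      exact h2 (by rw [← he]; rfl)
    | succ t₂ =>
      rw [uds_succ_app, uds_succ_app] at he
      injection he with _ he
      injection he with _ he
      obtain ⟨hh, hv⟩ := ih he h1 h2
      exact ⟨by omega, hv⟩

lemma head_uds_up {t h : ℕ} (hh : 1 ≤ h) (rest : List Bool) :
    (uds t ++ (up h ++ rest)).head? = some true := by
  cases t with
  | zero =>
    cases h with
    | zero => omega
    | succ h => simp [uds, up, List.replicate_succ]
  | succ t => rw [uds_succ_app]; rfl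

lemma get1_up {h : ℕ} (hh : 2 ≤ h) (rest : List Bool) :
    (up h ++ rest)[1]? = some true := by
  match h, hh with
  | (k + 2), _ =>
    rw [up_succ_app, up_succ_app]
    rfl

lemma uniq {c : ℕ} : ∀ {a₁ t₁ h₁ a₂ t₂ h₂ : ℕ} {r₁ r₂ : List Bool},
    dn a₁ ++ (uds t₁ ++ (up h₁ ++ r₁)) = dn a₂ ++ (uds t₂ ++ (up h₂ ++ r₂)) →
    1 ≤ h₁ → a₁ ≤ c → (1 ≤ t₁ → a₁ = c) → a₁ + 2 ≤ c + h₁ → r₁.head? = some false →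
    1 ≤ h₂ → a₂ ≤ c → (1 ≤ t₂ → a₂ = c) → a₂ + 2 ≤ c + h₂ → r₂.head? = some false →
    a₁ = a₂ ∧ t₁ = t₂ ∧ h₁ = h₂ ∧ r₁ = r₂ := by
  intro a₁ t₁ h₁ a₂ t₂ h₂ r₁ r₂ he p1 p2 p3 p4 p5 q1 q2 q3 q4 q5
  obtain ⟨ha, he2⟩ := dnPeel a₁ he
    (by rw [head_uds_up p1]; simp) (by rw [head_uds_up q1]; simp)
  subst ha
  rcases Nat.lt_or_ge h₁ 2 with hs1 | hs1
  · -- h₁ = 1, so t₁ = 0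
    have hh1 : h₁ = 1 := by omega
    have ht1 : t₁ = 0 := by
      by_contra hc
      have := p3 (by omega)
      omega
    subst hh1; subst ht1
    rcases Nat.lt_or_ge h₂ 2 with hs2 | hs2
    · have hh2 : h₂ = 1 := by omega
      have ht2 : t₂ = 0 := by
        by_contra hc
        have := q3 (by omega)
        omega
      subst hh2; subst ht2
      have hr : r₁ = r₂ := by simpa [uds, up] using he2
      exact ⟨rfl, rfl, rfl, hr⟩
    · -- h₂ ≥ 2 : t₂ = ? compare second characters
      exfalso
      have ht2 : t₂ = 0 := by
        by_contra hc
        have := q3 (by omega)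
        omega
      subst ht2
      simp [uds] at he2
      have e1 : (true :: r₁)[1]? = some false := by
        cases r₁ with
        | nil => simp at p5
        | cons b r => simp at p5; simp [p5]
      rw [he2, get1_up hs2] at e1
      simp at e1
  · rcases Nat.lt_or_ge h₂ 2 with hs2 | hs2
    · -- symmetric: h₂ = 1, h₁ ≥ 2
      exfalso
      have hh2 : h₂ = 1 := by omega
      have ht2 : t₂ = 0 := by
        by_contra hc
        have := q3 (by omega)
        omega
      subst hh2; subst ht2
      have ht1 : t₁ = 0 := by
        by_contra hc
        have := p3 (by omega)
        omega
      subst ht1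
      simp [uds] at he2
      have e1 : (true :: r₂)[1]? = some false := by
        cases r₂ with
        | nil => simp at q5
        | cons b r => simp at q5; simp [q5]
      rw [← he2, get1_up hs1] at e1
      simp at e1
    · obtain ⟨ht, he3⟩ := udsPeel t₁ he2
        (by rw [get1_up hs1]; simp) (by rw [get1_up hs2]; simp)
      obtain ⟨hu, hr⟩ := upPeel h₁ he3 (by rw [p5]; simp) (by rw [q5]; simp)
      exact ⟨rfl, ht, hu, hr⟩

lemma uniq0 {c T : ℕ} {a t h : ℕ} {rest : List Bool}
    (he : dn c ++ uds T = dn a ++ (uds t ++ (up h ++ rest)))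
    (p1 : 1 ≤ h) (p2 : a ≤ c) (p3 : 1 ≤ t → a = c) (p4 : a + 2 ≤ c + h)
    (p5 : rest.head? = some false) : False := by
  have hud : (uds T).head? ≠ some false := by
    cases T with
    | zero => simp [uds]
    | succ T => rw [show uds (T + 1) = uds (T+1) ++ [] by simp, uds_succ_app]; simp
  obtain ⟨ha, he2⟩ := dnPeel c (by rw [← he]) hud (by rw [head_uds_up p1]; simp)
  have hh2 : 2 ≤ h := by omega
  have he2' : uds T ++ [] = uds t ++ (up h ++ rest) := by simpa using he2
  obtain ⟨ht, he3⟩ := udsPeel T he2' (by simp) (by rw [get1_up hh2]; simp)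
  have : (up h ++ rest).length = 0 := by rw [← he3]; rfl
  rw [List.length_append, List.length_replicate] at this
  omega

lemma seg_assoc (u f p r : ℕ) (rest : List Bool) :
    seg u f p r ++ rest = dn (min u (p - r) - f) ++
      (uds ((p - r) - u) ++ (up (p + 1 - max u (p - r)) ++ rest)) := by
  simp [seg, List.append_assoc]

lemma inj {m : ℕ} : ∀ (s₁ s₂ : List (ℕ × ℕ)) (u f fb : ℕ),
    Good m u fb s₁ → Good m u fb s₂ → f ≤ u → f ≤ fb →
    fromSeq m u f s₁ = fromSeq m u f s₂ → s₁ = s₂ := by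
  intro s₁
  match s₁ with
  | [] =>
    intro s₂ u f fb _ hg2 hfu hffb he
    match s₂ with
    | [] => rfl
    | (p, r) :: s₂ =>
      exfalso
      obtain ⟨g1, g2, g3, g4, g5, g6⟩ := hg2
      rw [fromSeq, fromSeq, seg_assoc] at he
      exact uniq0 (c := u - f) he (by omega) (by omega) (fun h => by omega)
        (by omega) (head_fromSeq (by omega) g6)
  | (p, r) :: s₁ =>
    intro s₂ u f fb hg1 hg2 hfu hffb he
    match s₂ with
    | [] =>
      exfalso
      obtain ⟨g1, g2, g3, g4, g5, g6⟩ := hg1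
      rw [fromSeq, fromSeq, seg_assoc] at he
      exact uniq0 (c := u - f) he.symm (by omega) (by omega) (fun h => by omega)
        (by omega) (head_fromSeq (by omega) g6)
    | (p₂, r₂) :: s₂ =>
      obtain ⟨g1, g2, g3, g4, g5, g6⟩ := hg1
      obtain ⟨k1, k2, k3, k4, k5, k6⟩ := hg2
      rw [fromSeq, fromSeq, seg_assoc, seg_assoc] at he
      obtain ⟨ha, ht, hh, hr⟩ := uniq (c := u - f) he
        (by omega) (by omega) (fun h => by omega) (by omega)
        (head_fromSeq (by omega) g6)
        (by omega) (by omega) (fun h => by omega) (by omega)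
        (head_fromSeq (by omega) k6)
      have hp : p = p₂ := by omega
      have hrr : r = r₂ := by omega
      subst hp; subst hrr
      have := inj s₁ s₂ (p + 1) (p - r) (p - r + 1) g6 k6 (by omega) (by omega) hr
      rw [this]

end Stmt4

open Stmt4 in
theorem stmt_4 (n d : ℕ) :
    {s : List (ℕ × ℕ) | RunEnc n s ∧ (s.map Prod.snd).sum = d}.ncard =
      {w : List Bool | IsDyck (n + 1) w ∧ dstat w = d}.ncard := by
  classical
  set A := {s : List (ℕ × ℕ) | RunEnc n s ∧ (s.map Prod.snd).sum = d} with hA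
  set B := {w : List Bool | IsDyck (n + 1) w ∧ dstat w = d} with hB
  set F := fromSeq (n + 1) 0 0 with hF
  have hRE : ∀ s, RunEnc n s ↔ Good (n + 1) 0 0 s := by
    intro s
    rw [Stmt4.good_iff]
    unfold RunEnc
    constructor
    · rintro ⟨h1, h2, h3⟩
      refine ⟨fun pr hpr => ?_, h2, h3, fun pr _ => ⟨Nat.zero_le _, Nat.zero_le _⟩⟩
      have := h1 pr hpr
      exact ⟨this.1, this.2.1, by omega⟩
    · rintro ⟨h1, h2, h3, -⟩
      refine ⟨fun pr hpr => ?_, h2, h3⟩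
      have := h1 pr hpr
      exact ⟨this.1, this.2.1, by omega⟩
  have hbal0 : ∀ w : List Bool, Bal 0 w ↔
      (∀ k, (w.take k).count false ≤ (w.take k).count true) := by
    intro w
    unfold Bal
    simp
  have hMaps : ∀ s ∈ A, F s ∈ B := by
    intro s hs
    obtain ⟨hre, hsum⟩ := hs
    have hg : Good (n + 1) 0 0 s := (hRE s).1 hre
    have hcnt := counts_fromSeq (f := 0) hg (le_refl 0) (le_refl 0) (Nat.zero_le _)
    have hbal := bal_fromSeq (f := 0) hg (le_refl 0) (le_refl 0) (Nat.zero_le _)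
    have hds := dstat_fromSeq (f := 0) hg (le_refl 0) (le_refl 0) (Nat.zero_le _)
    rw [← hF] at hcnt hbal hds
    have hlen := count_tf (F s)
    constructor
    · refine ⟨by omega, ?_, by omega⟩
      intro k
      have := hbal k
      simpa using this
    · rw [dstat_eq]
      rw [show (0 : ℕ) - 0 = 0 from rfl] at hds
      rw [hds, hsum]
  have hInj : Set.InjOn F A := by
    intro s₁ h₁ s₂ h₂ he
    exact inj s₁ s₂ 0 0 0 ((hRE s₁).1 h₁.1) ((hRE s₂).1 h₂.1) (le_refl 0) (le_refl 0) he
  have hSurj : ∀ w ∈ B, ∃ s ∈ A, F s = w := by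
    intro w hw
    obtain ⟨⟨hlen, hpre, hcnt⟩, hds⟩ := hw
    have htf := count_tf w
    have hct : w.count true = (n + 1) - 0 := by omega
    have hcf : w.count false = (n + 1) - 0 := by omega
    have hb : Bal (0 - 0) w := by
      intro k
      have := hpre k
      simpa using this
    obtain ⟨s, hg, hfs⟩ := surj w.length w 0 0 0 (le_refl _) hb hct hcf
      (le_refl 0) (Nat.zero_le _) (Or.inl (le_refl 0))
    refine ⟨s, ⟨(hRE s).2 hg, ?_⟩, by rw [hF]; exact hfs⟩
    have hds2 := dstat_fromSeq (f := 0) hg (le_refl 0) (le_refl 0) (Nat.zero_le _)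
    rw [show (0 : ℕ) - 0 = 0 from rfl] at hds2
    rw [← hds, dstat_eq, ← hfs]
    exact hds2.symm
  have hbij : Set.BijOn F A B := ⟨hMaps, hInj, hSurj⟩
  calc A.ncard = (F '' A).ncard := (Set.ncard_image_of_injOn hInj).symm
    _ = B.ncard := by rw [hbij.image_eq]
end

section
/- In any sequence of pairs $(p_1,r_1),\ldots,(p_k,r_k)$ with $1 \le r_i \le p_i$, strictly increasing $p_i$, and strictly increasing $p_i - r_i$, a fixed index value $m$ is covered by (i.e., lies in the interval $[p_i - r_i + 1, p_i]$ of) at most $j$ of the runs, where $j$ is the number of distinct values $\le m$ covered by at least one run. -/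
/-- The run `(p, r)` covers the generator index `m` if `m` lies in the
interval `[p - r + 1, p]` of indices of the run. -/
def Covers (pr : ℕ × ℕ) (m : ℕ) : Prop := pr.1 - pr.2 + 1 ≤ m ∧ m ≤ pr.1

instance : ∀ pr m, Decidable (Covers pr m) := fun _ _ => instDecidableAnd

theorem stmt_6 (s : List (ℕ × ℕ)) (m : ℕ)
    (h1 : ∀ pr ∈ s, 1 ≤ pr.2 ∧ pr.2 ≤ pr.1)
    (h2 : List.Chain' (· < ·) (s.map Prod.fst))
    (h3 : List.Chain' (· < ·) (s.map fun pr => pr.1 - pr.2)) :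
    (s.filter fun pr => Covers pr m).length ≤
      ((Finset.Icc 1 m).filter fun v => ∃ pr ∈ s, Covers pr v).card := by
  classical
  set t := s.filter fun pr => Covers pr m with ht
  have hsub : t.Sublist s := List.filter_sublist
  have hp2 : s.Pairwise (fun a b : ℕ × ℕ => a.1 - a.2 < b.1 - b.2) :=
    List.pairwise_map.mp (List.isChain_iff_pairwise.mp h3)
  have hpt : (t.map fun pr => pr.1 - pr.2 + 1).Pairwise (· < ·) :=
    List.pairwise_map.mpr ((hp2.sublist hsub).imp (fun h => by omega))
  have hnodup : (t.map fun pr => pr.1 - pr.2 + 1).Nodup :=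
    hpt.imp fun h => Nat.ne_of_lt h
  have hlen : t.length = (t.map fun pr => pr.1 - pr.2 + 1).toFinset.card := by
    rw [List.toFinset_card_of_nodup hnodup, List.length_map]
  rw [hlen]
  apply Finset.card_le_card
  intro v hv
  simp only [List.mem_toFinset, List.mem_map] at hv
  obtain ⟨pr, hprt, hfv⟩ := hv
  rw [ht, List.mem_filter] at hprt
  obtain ⟨hprs, hcov⟩ := hprt
  have hcov' : Covers pr m := by simpa using hcov
  obtain ⟨h12, h22⟩ := h1 pr hprs
  obtain ⟨hc1, hc2⟩ := hcov'
  subst hfv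
  simp only [Finset.mem_filter, Finset.mem_Icc]
  refine ⟨⟨by omega, by omega⟩, pr, hprs, ?_⟩
  exact ⟨by omega, by omega⟩
end

section
/- The number of 321-avoiding permutations of $\{1,\ldots,n+1\}$ equals the Catalan number $C_{n+1}$. -/
open List Finset

namespace AV

variable {N k : ℕ}

/-- number of elements of `A` that are `≤ a` -/
def cnt (A : Finset (Fin N)) (a : Fin N) : ℕ := (A.filter (· ≤ a)).card

lemma mem_iff_exists_emb {A : Finset (Fin N)} (h : A.card = k) {b : Fin N} :
    b ∈ A ↔ ∃ t : Fin k, A.orderEmbOfFin h t = b := by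
  rw [← Finset.mem_coe, ← Finset.range_orderEmbOfFin A h]
  rfl

lemma cnt_le_card (A : Finset (Fin N)) (h : A.card = k) (a : Fin N) : cnt A a ≤ k :=
  h ▸ Finset.card_filter_le _ _

lemma cnt_emb (A : Finset (Fin N)) (h : A.card = k) (t : Fin k) :
    cnt A (A.orderEmbOfFin h t) = t + 1 := by
  have himg : A.filter (· ≤ A.orderEmbOfFin h t)
      = Finset.image (fun t' : Fin k => A.orderEmbOfFin h t') (Finset.Iic t) := by
    ext b
    simp only [Finset.mem_filter, Finset.mem_image, Finset.mem_Iic]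
    constructor
    · rintro ⟨hb, hle⟩
      obtain ⟨t', rfl⟩ := (mem_iff_exists_emb h).1 hb
      exact ⟨t', (A.orderEmbOfFin h).le_iff_le.1 hle, rfl⟩
    · rintro ⟨t', ht', rfl⟩
      exact ⟨A.orderEmbOfFin_mem h t', (A.orderEmbOfFin h).le_iff_le.2 ht'⟩
  rw [cnt, himg, Finset.card_image_of_injective _ (A.orderEmbOfFin h).injective,
    Fin.card_Iic]

lemma cnt_lt_emb (A : Finset (Fin N)) (h : A.card = k) (t : Fin k) :
    (A.filter (· < A.orderEmbOfFin h t)).card = t := by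
  have himg : A.filter (· < A.orderEmbOfFin h t)
      = Finset.image (fun t' : Fin k => A.orderEmbOfFin h t') (Finset.Iio t) := by
    ext b
    simp only [Finset.mem_filter, Finset.mem_image, Finset.mem_Iio]
    constructor
    · rintro ⟨hb, hle⟩
      obtain ⟨t', rfl⟩ := (mem_iff_exists_emb h).1 hb
      exact ⟨t', (A.orderEmbOfFin h).lt_iff_lt.1 hle, rfl⟩
    · rintro ⟨t', ht', rfl⟩
      exact ⟨A.orderEmbOfFin_mem h t', (A.orderEmbOfFin h).lt_iff_lt.2 ht'⟩
  rw [himg, Finset.card_image_of_injective _ (A.orderEmbOfFin h).injective,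
    Fin.card_Iio]

lemma emb_le_iff {A : Finset (Fin N)} (h : A.card = k) (t : Fin k) (a : Fin N) :
    A.orderEmbOfFin h t ≤ a ↔ (t : ℕ) < cnt A a := by
  constructor
  · intro hle
    have hsub : A.filter (· ≤ A.orderEmbOfFin h t) ⊆ A.filter (· ≤ a) :=
      Finset.monotone_filter_right _ (fun b _ hb => le_trans hb hle)
    have := Finset.card_le_card hsub
    rw [← cnt, ← cnt, cnt_emb A h t] at this
    omega
  · intro hlt
    by_contra hle
    push_neg at hle
    have hsub : A.filter (· ≤ a) ⊆ A.filter (· < A.orderEmbOfFin h t) :=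
      Finset.monotone_filter_right _ (fun b _ hb => lt_of_le_of_lt hb hle)
    have := Finset.card_le_card hsub
    rw [cnt_lt_emb A h t] at this
    rw [cnt] at hlt
    omega

lemma cnt_add_cnt_compl (A : Finset (Fin N)) (a : Fin N) :
    cnt A a + cnt Aᶜ a = a + 1 := by
  have hdisj : Disjoint (A.filter (· ≤ a)) (Aᶜ.filter (· ≤ a)) :=
    Finset.disjoint_filter_filter (disjoint_compl_right)
  have hunion : A.filter (· ≤ a) ∪ Aᶜ.filter (· ≤ a) = Finset.Iic a := by
    rw [← Finset.filter_union]
    ext b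
    simp [Finset.mem_Iic]
  have := Finset.card_union_of_disjoint hdisj
  rw [hunion, Fin.card_Iic] at this
  rw [cnt, cnt, ← this]

variable {I V : Finset (Fin N)} (hI : I.card = k) (hV : V.card = k)

lemma cnt_dom (hdom : ∀ t : Fin k, I.orderEmbOfFin hI t < V.orderEmbOfFin hV t)
    (a : Fin N) : cnt V a ≤ cnt I a := by
  rcases Nat.eq_zero_or_pos (cnt V a) with h0 | hpos
  · omega
  · set m := cnt V a with hm
    have hmk : m ≤ k := cnt_le_card V hV a
    have ht : m - 1 < k := by omega
    have h1 : V.orderEmbOfFin hV ⟨m - 1, ht⟩ ≤ a := by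
      rw [emb_le_iff hV]
      simp only []
      omega
    have h2 : I.orderEmbOfFin hI ⟨m - 1, ht⟩ ≤ a :=
      le_of_lt (lt_of_lt_of_le (hdom _) h1)
    rw [emb_le_iff hI] at h2
    simp only [] at h2
    omega

lemma compl_card (A : Finset (Fin N)) (h : A.card = k) : Aᶜ.card = N - k := by
  rw [Finset.card_compl, h, Fintype.card_fin]

lemma emb_compl_dom (hdom : ∀ t : Fin k, I.orderEmbOfFin hI t < V.orderEmbOfFin hV t)
    (s : Fin (N - k)) :
    Vᶜ.orderEmbOfFin (compl_card V hV) s ≤ Iᶜ.orderEmbOfFin (compl_card I hI) s := by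
  rw [emb_le_iff]
  have h1 : (s : ℕ) < cnt Iᶜ (Iᶜ.orderEmbOfFin (compl_card I hI) s) := by
    rw [← emb_le_iff (compl_card I hI)]
  have h2 := cnt_dom hI hV hdom (Iᶜ.orderEmbOfFin (compl_card I hI) s)
  have h3 := cnt_add_cnt_compl I (Iᶜ.orderEmbOfFin (compl_card I hI) s)
  have h4 := cnt_add_cnt_compl V (Iᶜ.orderEmbOfFin (compl_card I hI) s)
  omega


variable {N : ℕ}

end AV



def Avoids321 {n : ℕ} (π : Equiv.Perm (Fin n)) : Prop :=
  ¬ ∃ i j k : Fin n, i < j ∧ j < k ∧ π k < π j ∧ π j < π i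

namespace AV

variable {N k : ℕ}

/-- In a 321-avoiding permutation, values at excedances increase. -/
lemma exc_mono {π : Equiv.Perm (Fin N)} (hav : Avoids321 π) {i j : Fin N}
    (hij : i < j) (hi : i < π i) (hj : j < π j) : π i < π j := by
  by_contra hle
  push_neg at hle
  have hne : π j ≠ π i := fun h => absurd (π.injective h) (ne_of_gt hij)
  have hlt : π j < π i := lt_of_le_of_ne hle hne
  -- find k > j with π k < π j
  have hk : ∃ m : Fin N, j < m ∧ π m < π j := by
    by_contra hno
    push_neg at hno
    -- all values ≤ π j occur at positions ≤ j, and π i > π j occurs at i ≤ j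
    have hsub : Finset.Iic (π j) ∪ {π i} ⊆ Finset.image π (Finset.Iic j) := by
      intro v hv
      simp only [Finset.mem_union, Finset.mem_Iic, Finset.mem_singleton] at hv
      rcases hv with hv | rfl
      · obtain ⟨m, rfl⟩ := π.surjective v
        rcases le_or_gt m j with hm | hm
        · exact Finset.mem_image_of_mem π (Finset.mem_Iic.2 hm)
        · have h2 := hno m hm
          have : π m = π j := le_antisymm hv h2
          have := π.injective this
          omega
      · exact Finset.mem_image_of_mem π (Finset.mem_Iic.2 (le_of_lt hij))
    have hcard := Finset.card_le_card hsub
    rw [Finset.card_image_of_injective _ π.injective] at hcard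
    have h1 : (Finset.Iic (π j) ∪ {π i}).card = (π j : ℕ) + 2 := by
      rw [Finset.card_union_of_disjoint (by simp [Finset.disjoint_singleton_right,
        Finset.mem_Iic, not_le, hlt]), Fin.card_Iic]
      simp
    rw [h1, Fin.card_Iic] at hcard
    have : (j : ℕ) < (π j : ℕ) := hj
    omega
  obtain ⟨m, hjm, hm⟩ := hk
  exact hav ⟨i, j, m, hij, hjm, hm, hlt⟩

/-- In a 321-avoiding permutation, values at (weak) deficiencies increase. -/
lemma def_mono {π : Equiv.Perm (Fin N)} (hav : Avoids321 π) {i j : Fin N}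
    (hij : i < j) (hi : π i ≤ i) (hj : π j ≤ j) : π i < π j := by
  by_contra hle
  push_neg at hle
  have hne : π j ≠ π i := fun h => absurd (π.injective h) (ne_of_gt hij)
  have hlt : π j < π i := lt_of_le_of_ne hle hne
  -- find k < i with π k > π i
  have hk : ∃ m : Fin N, m < i ∧ π i < π m := by
    by_contra hno
    push_neg at hno
    have hsub : Finset.image π (Finset.Iic i) ⊆ Finset.Iic (π i) := by
      intro v hv
      obtain ⟨m, hm, rfl⟩ := Finset.mem_image.1 hv
      rw [Finset.mem_Iic] at hm ⊢
      rcases lt_or_eq_of_le hm with hm | rfl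
      · exact hno m hm
      · exact le_refl _
    have hcard := Finset.card_le_card hsub
    rw [Finset.card_image_of_injective _ π.injective, Fin.card_Iic, Fin.card_Iic] at hcard
    have hcard' : (π i : ℕ) ≤ (i : ℕ) := hi
    have heq : Finset.image π (Finset.Iic i) = Finset.Iic (π i) :=
      Finset.eq_of_subset_of_card_le hsub (by
        rw [Finset.card_image_of_injective _ π.injective, Fin.card_Iic, Fin.card_Iic]; omega)
    have hmem : π j ∈ Finset.Iic (π i) := Finset.mem_Iic.2 (le_of_lt hlt)
    rw [← heq] at hmem
    obtain ⟨m, hm, hmeq⟩ := Finset.mem_image.1 hmem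
    have := π.injective hmeq
    subst this
    rw [Finset.mem_Iic] at hm
    exact absurd hij (not_lt.2 hm)
  obtain ⟨m, hmi, hm⟩ := hk
  exact hav ⟨m, i, j, hmi, hij, hlt, hm⟩

section construct

variable (I V : Finset (Fin N)) (hI : I.card = k) (hV : V.card = k)

/-- the function sending the `t`-th element of `I` to the `t`-th element of `V` and the
`s`-th element of `Iᶜ` to the `s`-th element of `Vᶜ`. -/
def gfun (i : Fin N) : Fin N :=
  if h : i ∈ I then V.orderEmbOfFin hV ((I.orderIsoOfFin hI).symm ⟨i, h⟩)
  else Vᶜ.orderEmbOfFin (compl_card V hV)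
    ((Iᶜ.orderIsoOfFin (compl_card I hI)).symm ⟨i, by simpa using h⟩)

lemma gfun_emb (t : Fin k) :
    gfun I V hI hV (I.orderEmbOfFin hI t) = V.orderEmbOfFin hV t := by
  have hmem : I.orderEmbOfFin hI t ∈ I := I.orderEmbOfFin_mem hI t
  rw [gfun, dif_pos hmem]
  congr 1
  rw [OrderIso.symm_apply_eq]
  exact Subtype.ext (I.coe_orderIsoOfFin_apply hI t).symm

lemma gfun_emb_compl (s : Fin (N - k)) :
    gfun I V hI hV (Iᶜ.orderEmbOfFin (compl_card I hI) s)
      = Vᶜ.orderEmbOfFin (compl_card V hV) s := by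
  have hmem : Iᶜ.orderEmbOfFin (compl_card I hI) s ∈ Iᶜ := Iᶜ.orderEmbOfFin_mem _ s
  rw [Finset.mem_compl] at hmem
  rw [gfun, dif_neg hmem]
  congr 1
  rw [OrderIso.symm_apply_eq]
  exact Subtype.ext (Iᶜ.coe_orderIsoOfFin_apply (compl_card I hI) s).symm

lemma gfun_bijective : Function.Bijective (gfun I V hI hV) := by
  rw [Finite.injective_iff_bijective.symm]
  intro a b hab
  by_cases ha : a ∈ I <;> by_cases hb : b ∈ I
  · simp only [gfun] at hab
    rw [dif_pos ha, dif_pos hb] at hab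
    have := (V.orderEmbOfFin hV).injective hab
    have := (I.orderIsoOfFin hI).symm.injective this
    exact congrArg Subtype.val this
  · simp only [gfun] at hab
    rw [dif_pos ha, dif_neg hb] at hab
    have h1 := V.orderEmbOfFin_mem hV ((I.orderIsoOfFin hI).symm ⟨a, ha⟩)
    rw [hab] at h1
    have h2 := Vᶜ.orderEmbOfFin_mem (compl_card V hV)
      ((Iᶜ.orderIsoOfFin (compl_card I hI)).symm ⟨b, by simpa using hb⟩)
    rw [Finset.mem_compl] at h2
    exact absurd h1 h2
  · simp only [gfun] at hab
    rw [dif_neg ha, dif_pos hb] at hab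
    have h1 := V.orderEmbOfFin_mem hV ((I.orderIsoOfFin hI).symm ⟨b, hb⟩)
    rw [← hab] at h1
    have h2 := Vᶜ.orderEmbOfFin_mem (compl_card V hV)
      ((Iᶜ.orderIsoOfFin (compl_card I hI)).symm ⟨a, by simpa using ha⟩)
    rw [Finset.mem_compl] at h2
    exact absurd h1 h2
  · simp only [gfun] at hab
    rw [dif_neg ha, dif_neg hb] at hab
    have := (Vᶜ.orderEmbOfFin (compl_card V hV)).injective hab
    have := (Iᶜ.orderIsoOfFin (compl_card I hI)).symm.injective this
    exact congrArg Subtype.val this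

/-- the permutation built from the data `(I, V)`. -/
noncomputable def gperm : Equiv.Perm (Fin N) := Equiv.ofBijective _ (gfun_bijective I V hI hV)

lemma gperm_apply (i : Fin N) : gperm I V hI hV i = gfun I V hI hV i := rfl

lemma gperm_mono_on {i j : Fin N} (hij : i < j)
    (h : (i ∈ I ∧ j ∈ I) ∨ (i ∉ I ∧ j ∉ I)) :
    gperm I V hI hV i < gperm I V hI hV j := by
  rcases h with ⟨hi, hj⟩ | ⟨hi, hj⟩
  · obtain ⟨t, rfl⟩ := (mem_iff_exists_emb hI).1 hi
    obtain ⟨t', rfl⟩ := (mem_iff_exists_emb hI).1 hj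
    have htt : t < t' := (I.orderEmbOfFin hI).lt_iff_lt.1 hij
    rw [gperm_apply, gperm_apply, gfun_emb, gfun_emb]
    exact (V.orderEmbOfFin hV).lt_iff_lt.2 htt
  · rw [← Finset.mem_compl] at hi hj
    obtain ⟨s, rfl⟩ := (mem_iff_exists_emb (compl_card I hI)).1 hi
    obtain ⟨s', rfl⟩ := (mem_iff_exists_emb (compl_card I hI)).1 hj
    have hss : s < s' := (Iᶜ.orderEmbOfFin (compl_card I hI)).lt_iff_lt.1 hij
    rw [gperm_apply, gperm_apply, gfun_emb_compl, gfun_emb_compl]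
    exact (Vᶜ.orderEmbOfFin (compl_card V hV)).lt_iff_lt.2 hss

lemma gperm_avoids : Avoids321 (gperm I V hI hV) := by
  rintro ⟨i, j, m, hij, hjm, h1, h2⟩
  by_cases hi : i ∈ I <;> by_cases hj : j ∈ I <;> by_cases hm : m ∈ I
  all_goals first
    | exact absurd (gperm_mono_on I V hI hV hij (Or.inl ⟨hi, hj⟩)) (not_lt.2 (le_of_lt h2))
    | exact absurd (gperm_mono_on I V hI hV hij (Or.inr ⟨hi, hj⟩)) (not_lt.2 (le_of_lt h2))
    | exact absurd (gperm_mono_on I V hI hV hjm (Or.inl ⟨hj, hm⟩)) (not_lt.2 (le_of_lt h1))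
    | exact absurd (gperm_mono_on I V hI hV hjm (Or.inr ⟨hj, hm⟩)) (not_lt.2 (le_of_lt h1))
    | exact absurd (gperm_mono_on I V hI hV (lt_trans hij hjm) (Or.inl ⟨hi, hm⟩))
        (not_lt.2 (le_of_lt (lt_trans h1 h2)))
    | exact absurd (gperm_mono_on I V hI hV (lt_trans hij hjm) (Or.inr ⟨hi, hm⟩))
        (not_lt.2 (le_of_lt (lt_trans h1 h2)))

lemma gperm_exc_iff (hdom : ∀ t : Fin k, I.orderEmbOfFin hI t < V.orderEmbOfFin hV t)
    (i : Fin N) : i < gperm I V hI hV i ↔ i ∈ I := by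
  constructor
  · intro hlt
    by_contra hni
    rw [← Finset.mem_compl] at hni
    obtain ⟨s, rfl⟩ := (mem_iff_exists_emb (compl_card I hI)).1 hni
    rw [gperm_apply, gfun_emb_compl] at hlt
    exact absurd (emb_compl_dom hI hV hdom s) (not_le.2 hlt)
  · intro hi
    obtain ⟨t, rfl⟩ := (mem_iff_exists_emb hI).1 hi
    rw [gperm_apply, gfun_emb]
    exact hdom t

end construct


variable {N : ℕ}

/-- The set of "valley data" lists: componentwise strictly increasing lists of pairs
`(x, y)` with `1 ≤ y ≤ x < n`. -/
def PSet (n : ℕ) : Set (List (ℕ × ℕ)) :=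
  {l | l.Pairwise (fun a b => a.1 < b.1 ∧ a.2 < b.2) ∧ ∀ p ∈ l, 1 ≤ p.2 ∧ p.2 ≤ p.1 ∧ p.1 < n}

/-- the list of excedance positions of `π`, in increasing order. -/
def excList (π : Equiv.Perm (Fin N)) : List (Fin N) :=
  (List.finRange N).filter (fun i => decide (i < π i))

/-- the excedance data of `π` as a list of pairs. -/
def fmap (π : Equiv.Perm (Fin N)) : List (ℕ × ℕ) :=
  (excList π).map (fun i => ((π i : ℕ), (i : ℕ) + 1))

lemma excList_mem {π : Equiv.Perm (Fin N)} {i : Fin N} : i ∈ excList π ↔ i < π i := by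
  simp [excList]

lemma excList_pairwise (π : Equiv.Perm (Fin N)) : (excList π).Pairwise (· < ·) :=
  (List.pairwise_lt_finRange N).sublist List.filter_sublist

lemma fmap_mem {π : Equiv.Perm (Fin N)} (hav : Avoids321 π) : fmap π ∈ PSet N := by
  constructor
  · rw [fmap, List.pairwise_map]
    refine (excList_pairwise π).imp_of_mem ?_
    intro a b ha hb hab
    have ha' : a < π a := excList_mem.1 ha
    have hb' : b < π b := excList_mem.1 hb
    have h := exc_mono hav hab ha' hb'
    have h' : (π a : ℕ) < (π b : ℕ) := h
    have h'' : (a : ℕ) < (b : ℕ) := hab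
    exact ⟨h', by omega⟩
  · rintro p hp
    rw [fmap, List.mem_map] at hp
    obtain ⟨i, hi, rfl⟩ := hp
    have hi' : i < π i := excList_mem.1 hi
    have h : (i : ℕ) < (π i : ℕ) := hi'
    exact ⟨by omega, by omega, (π i).isLt⟩

/-- the sorted list of elements of a finset `I` is `finRange` filtered by membership. -/
lemma filter_mem_eq_emb_list {k : ℕ} (I : Finset (Fin N)) (hI : I.card = k) :
    (List.finRange N).filter (fun i => decide (i ∈ I))
      = (List.finRange k).map (I.orderEmbOfFin hI) := by
  haveI : IsAntisymm (Fin N) (· < ·) :=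
    ⟨fun a b h h' => absurd (lt_trans h h') (lt_irrefl _)⟩
  have h1 : ((List.finRange N).filter (fun i => decide (i ∈ I))).Pairwise (· < ·) :=
    (List.pairwise_lt_finRange N).sublist List.filter_sublist
  have h2 : ((List.finRange k).map (I.orderEmbOfFin hI)).Pairwise (· < ·) := by
    rw [List.pairwise_map]
    exact (List.pairwise_lt_finRange k).imp (fun h => (I.orderEmbOfFin hI).lt_iff_lt.2 h)
  refine List.Perm.eq_of_pairwise (fun a b _ _ h h' => absurd (lt_trans h h') (lt_irrefl _)) h1 h2 ?_
  refine List.perm_of_nodup_nodup_toFinset_eq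
    (h1.imp ne_of_lt) (h2.imp ne_of_lt) ?_
  ext b
  simp only [List.mem_toFinset, List.mem_filter, List.mem_finRange, true_and,
    List.mem_map, decide_eq_true_eq]
  rw [mem_iff_exists_emb hI]

/-- the excedance set of `π`. -/
def excSet (π : Equiv.Perm (Fin N)) : Finset (Fin N) :=
  Finset.univ.filter (fun i => i < π i)

lemma mem_excSet {π : Equiv.Perm (Fin N)} {i : Fin N} : i ∈ excSet π ↔ i < π i := by
  simp [excSet]

section of_perm

variable {π : Equiv.Perm (Fin N)} (hav : Avoids321 π) {k : ℕ} {I V : Finset (Fin N)}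
  (hI : I.card = k) (hV : V.card = k)
  (hIexc : ∀ i, i ∈ I ↔ i < π i) (hVval : V = I.image π)

include hav hIexc hVval in
lemma pi_emb (t : Fin k) :
    π (I.orderEmbOfFin hI t) = V.orderEmbOfFin hV t := by
  have huni := Finset.orderEmbOfFin_unique (f := fun t => π (I.orderEmbOfFin hI t)) hV
    (fun t => by rw [hVval]; exact Finset.mem_image_of_mem π (I.orderEmbOfFin_mem hI t))
    (fun t t' htt => by
      have h1 := (hIexc _).1 (I.orderEmbOfFin_mem hI t)
      have h2 := (hIexc _).1 (I.orderEmbOfFin_mem hI t')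
      exact exc_mono hav ((I.orderEmbOfFin hI).lt_iff_lt.2 htt) h1 h2)
  exact congrFun huni t

include hav hIexc hVval in
lemma pi_emb_compl (s : Fin (N - k)) :
    π (Iᶜ.orderEmbOfFin (compl_card I hI) s) = Vᶜ.orderEmbOfFin (compl_card V hV) s := by
  have huni := Finset.orderEmbOfFin_unique
    (f := fun s => π (Iᶜ.orderEmbOfFin (compl_card I hI) s)) (compl_card V hV)
    (fun s => by
      rw [Finset.mem_compl, hVval]
      intro hmem
      obtain ⟨i, hi, heq⟩ := Finset.mem_image.1 hmem
      have heq2 := π.injective heq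
      have h2 := Iᶜ.orderEmbOfFin_mem (compl_card I hI) s
      rw [Finset.mem_compl] at h2
      exact h2 (heq2 ▸ hi))
    (fun s s' hss => by
      have h1 := Iᶜ.orderEmbOfFin_mem (compl_card I hI) s
      have h2 := Iᶜ.orderEmbOfFin_mem (compl_card I hI) s'
      rw [Finset.mem_compl, hIexc, not_lt] at h1 h2
      exact def_mono hav ((Iᶜ.orderEmbOfFin (compl_card I hI)).lt_iff_lt.2 hss) h1 h2)
  exact congrFun huni s

end of_perm

/-- two 321-avoiding permutations with the same excedance set and the same values there
are equal. -/
lemma eq_of_exc_eq {π₁ π₂ : Equiv.Perm (Fin N)} (hav₁ : Avoids321 π₁) (hav₂ : Avoids321 π₂)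
    (hset : ∀ i, (i < π₁ i ↔ i < π₂ i)) (hval : ∀ i : Fin N, i < π₁ i → π₁ i = π₂ i) :
    π₁ = π₂ := by
  set I : Finset (Fin N) := excSet π₁ with hIdef
  have hIexc₁ : ∀ i, i ∈ I ↔ i < π₁ i := fun i => mem_excSet
  have hIexc₂ : ∀ i, i ∈ I ↔ i < π₂ i := fun i => mem_excSet.trans (hset i)
  set V : Finset (Fin N) := I.image π₁ with hVdef
  have hVval₂ : V = I.image π₂ := Finset.image_congr (fun i hi => hval i ((hIexc₁ i).1 hi))
  have hV : V.card = I.card := Finset.card_image_of_injective _ π₁.injective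
  apply Equiv.ext
  intro i
  by_cases hi : i ∈ I
  · exact hval i ((hIexc₁ i).1 hi)
  · rw [← Finset.mem_compl] at hi
    obtain ⟨s, rfl⟩ := (mem_iff_exists_emb (compl_card I rfl)).1 hi
    rw [pi_emb_compl hav₁ rfl hV hIexc₁ hVdef s,
      pi_emb_compl hav₂ rfl hV hIexc₂ hVval₂ s]

lemma fmap_injOn : Set.InjOn fmap {π : Equiv.Perm (Fin N) | Avoids321 π} := by
  intro π₁ h₁ π₂ h₂ heq
  have hE : excList π₁ = excList π₂ := by
    have h := congrArg (List.map (fun p : ℕ × ℕ => p.2)) heq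
    rw [fmap, fmap, List.map_map, List.map_map] at h
    exact List.map_injective_iff.2
      (fun a b hab => Fin.val_injective (by simpa using hab)) h
  have hvalmem : ∀ i ∈ excList π₁, π₁ i = π₂ i := by
    have h := congrArg (List.map (fun p : ℕ × ℕ => p.1)) heq
    rw [fmap, fmap, List.map_map, List.map_map, hE] at h
    intro i hi
    have := List.map_inj_left.1 h i (hE ▸ hi)
    exact Fin.val_injective (by simpa using this)
  apply eq_of_exc_eq h₁ h₂
  · intro i
    rw [← excList_mem, ← excList_mem, hE]
  · intro i hlt
    exact hvalmem i (excList_mem.2 hlt)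

lemma fmap_surjOn : Set.SurjOn fmap {π : Equiv.Perm (Fin N) | Avoids321 π} (PSet N) := by
  intro l hl
  obtain ⟨hpw, hcond⟩ := hl
  set k := l.length with hk
  -- the position and value sequences
  have hget : ∀ t : Fin k, 1 ≤ (l.get t).2 ∧ (l.get t).2 ≤ (l.get t).1 ∧ (l.get t).1 < N :=
    fun t => hcond _ (l.get_mem t)
  set u : Fin k → Fin N := fun t => ⟨(l.get t).2 - 1, by have := hget t; omega⟩ with hu
  set w : Fin k → Fin N := fun t => ⟨(l.get t).1, (hget t).2.2⟩ with hw
  have hrel : ∀ t t' : Fin k, t < t' → (l.get t).1 < (l.get t').1 ∧ (l.get t).2 < (l.get t').2 :=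
    fun t t' htt => List.pairwise_iff_get.1 hpw t t' htt
  have humono : StrictMono u := by
    intro t t' htt
    have h1 := (hrel t t' htt).2
    have h2 := (hget t).1
    exact Fin.mk_lt_mk.2 (by omega)
  have hwmono : StrictMono w := by
    intro t t' htt
    exact Fin.mk_lt_mk.2 (hrel t t' htt).1
  set I : Finset (Fin N) := Finset.image u Finset.univ with hIdef
  set V : Finset (Fin N) := Finset.image w Finset.univ with hVdef
  have hIc : I.card = k := by
    rw [hIdef, Finset.card_image_of_injective _ humono.injective, Finset.card_univ,
      Fintype.card_fin]
  have hVc : V.card = k := by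
    rw [hVdef, Finset.card_image_of_injective _ hwmono.injective, Finset.card_univ,
      Fintype.card_fin]
  have huemb : u = ⇑(I.orderEmbOfFin hIc) :=
    Finset.orderEmbOfFin_unique hIc (fun t => Finset.mem_image_of_mem u (Finset.mem_univ t))
      humono
  have hwemb : w = ⇑(V.orderEmbOfFin hVc) :=
    Finset.orderEmbOfFin_unique hVc (fun t => Finset.mem_image_of_mem w (Finset.mem_univ t))
      hwmono
  have hdom : ∀ t : Fin k, I.orderEmbOfFin hIc t < V.orderEmbOfFin hVc t := by
    intro t
    rw [← huemb, ← hwemb]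
    have h1 := (hget t).1
    have h2 := (hget t).2.1
    exact Fin.mk_lt_mk.2 (by omega)
  refine ⟨gperm I V hIc hVc, gperm_avoids I V hIc hVc, ?_⟩
  have hexc : ∀ i : Fin N, i < gperm I V hIc hVc i ↔ i ∈ I :=
    gperm_exc_iff I V hIc hVc hdom
  rw [fmap, excList]
  have hfilter : (List.finRange N).filter (fun i => decide (i < gperm I V hIc hVc i))
      = (List.finRange k).map (I.orderEmbOfFin hIc) := by
    rw [← filter_mem_eq_emb_list I hIc]
    apply List.filter_congr
    intro i _
    simp [hexc i]
  rw [hfilter, List.map_map]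
  have hfun : ∀ t : Fin k,
      ((fun i : Fin N => ((gperm I V hIc hVc i : ℕ), (i : ℕ) + 1)) ∘ I.orderEmbOfFin hIc) t
        = l.get t := by
    intro t
    have h1 : gperm I V hIc hVc (I.orderEmbOfFin hIc t) = V.orderEmbOfFin hVc t := by
      rw [gperm_apply, gfun_emb]
    rw [Function.comp_apply, h1, ← hwemb, ← huemb]
    show ((l.get t).1, (l.get t).2 - 1 + 1) = l.get t
    have h2 := (hget t).1
    rw [Nat.sub_add_cancel h2]
  calc (List.finRange k).map
        ((fun i : Fin N => ((gperm I V hIc hVc i : ℕ), (i : ℕ) + 1)) ∘ I.orderEmbOfFin hIc)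
      = (List.finRange k).map l.get := List.map_congr_left (fun t _ => hfun t)
    _ = l := List.map_get_finRange l

lemma fmap_image :
    fmap '' {π : Equiv.Perm (Fin N) | Avoids321 π} = PSet N := by
  apply Set.Subset.antisymm
  · rintro _ ⟨π, hπ, rfl⟩
    exact fmap_mem hπ
  · exact fmap_surjOn

lemma PSet_finite (n : ℕ) (hn : 0 < n) : (PSet n).Finite := by
  obtain ⟨m, rfl⟩ := Nat.exists_eq_add_of_lt hn
  rw [← fmap_image (N := 0 + m + 1)]
  exact Set.Finite.image _ (Set.toFinite _)

lemma PSet_ncard_eq (n : ℕ) :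
    {π : Equiv.Perm (Fin (n + 1)) | Avoids321 π}.ncard = (PSet (n + 1)).ncard := by
  rw [← fmap_image, Set.ncard_image_of_injOn fmap_injOn]


/-! ### Counting the valley data lists -/

/-- first-return join: build an element of `PSet (n+1)` from elements of
`PSet i` and `PSet (n-i)`. -/
def join (n i : ℕ) (ab : List (ℕ × ℕ) × List (ℕ × ℕ)) : List (ℕ × ℕ) :=
  ab.1.map (fun p => (p.1 + 1, p.2)) ++
    (if i = n then [] else (i + 1, i + 1) :: ab.2.map (fun p => (p.1 + (i + 1), p.2 + (i + 1))))

/-- the predicate "strictly below the diagonal". -/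
def Pb : ℕ × ℕ → Bool := fun p => decide (p.2 < p.1)

lemma takedrop_all {α : Type*} (P : α → Bool) (A : List α) (h : ∀ x ∈ A, P x = true) :
    A.takeWhile P = A ∧ A.dropWhile P = [] := by
  induction A with
  | nil => simp
  | cons a A ih =>
    have ha := h a (List.mem_cons_self)
    have h2 := ih (fun x hx => h x (List.mem_cons_of_mem _ hx))
    rw [List.takeWhile_cons, List.dropWhile_cons, ha]
    simp [h2.1, h2.2]

lemma takedrop_mid {α : Type*} (P : α → Bool) (A B : List α) (q : α)
    (h : ∀ x ∈ A, P x = true) (hq : P q = false) :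
    (A ++ q :: B).takeWhile P = A ∧ (A ++ q :: B).dropWhile P = q :: B := by
  induction A with
  | nil => simp [List.takeWhile_cons, List.dropWhile_cons, hq]
  | cons a A ih =>
    have ha := h a (List.mem_cons_self)
    have h2 := ih (fun x hx => h x (List.mem_cons_of_mem _ hx))
    rw [List.cons_append, List.takeWhile_cons, List.dropWhile_cons, ha]
    simp [h2.1, h2.2]

lemma dropWhile_head_false {α : Type*} (P : α → Bool) :
    ∀ (l : List α) {q : α} {B : List α}, l.dropWhile P = q :: B → P q = false := by
  intro l
  induction l with
  | nil => intro q B h; simp at h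
  | cons a t ih =>
    intro q B h
    rw [List.dropWhile_cons] at h
    cases hPa : P a with
    | true => rw [hPa] at h; simp at h; exact ih h
    | false =>
      rw [hPa] at h
      simp at h
      rw [← h.1]
      exact hPa

lemma PSet_zero : PSet 0 = {([] : List (ℕ × ℕ))} := by
  ext l
  constructor
  · rintro ⟨hpw, hc⟩
    cases l with
    | nil => rfl
    | cons p t =>
      have := hc p (List.mem_cons_self)
      omega
  · rintro rfl
    exact ⟨List.Pairwise.nil, by simp⟩

lemma join_mem {n i : ℕ} (hi : i ≤ n) {a b : List (ℕ × ℕ)}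
    (ha : a ∈ PSet i) (hb : b ∈ PSet (n - i)) : join n i (a, b) ∈ PSet (n + 1) := by
  obtain ⟨hapw, hac⟩ := ha
  obtain ⟨hbpw, hbc⟩ := hb
  constructor
  · rw [join, List.pairwise_append]
    refine ⟨?_, ?_, ?_⟩
    · rw [List.pairwise_map]
      exact hapw.imp (fun h => ⟨by omega, by omega⟩)
    · by_cases hin : i = n
      · simp [hin]
      · rw [if_neg hin, List.pairwise_cons]
        constructor
        · intro y hy
          rw [List.mem_map] at hy
          obtain ⟨q, hq, rfl⟩ := hy
          have := hbc q hq
          exact ⟨by omega, by omega⟩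
        · rw [List.pairwise_map]
          exact hbpw.imp (fun h => ⟨by omega, by omega⟩)
    · intro x hx y hy
      rw [List.mem_map] at hx
      obtain ⟨p, hp, rfl⟩ := hx
      have hpc := hac p hp
      by_cases hin : i = n
      · rw [if_pos hin] at hy
        simp at hy
      · rw [if_neg hin] at hy
        rcases List.mem_cons.1 hy with rfl | hy
        · exact ⟨by omega, by omega⟩
        · rw [List.mem_map] at hy
          obtain ⟨q, hq, rfl⟩ := hy
          have hqc := hbc q hq
          exact ⟨by omega, by omega⟩
  · intro p hp
    rw [join, List.mem_append] at hp
    rcases hp with hp | hp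
    · rw [List.mem_map] at hp
      obtain ⟨q, hq, rfl⟩ := hp
      have := hac q hq
      exact ⟨by omega, by omega, by omega⟩
    · by_cases hin : i = n
      · rw [if_pos hin] at hp
        simp at hp
      · rw [if_neg hin] at hp
        rcases List.mem_cons.1 hp with rfl | hp
        · have : i < n := lt_of_le_of_ne hi hin
          exact ⟨by omega, by omega, by omega⟩
        · rw [List.mem_map] at hp
          obtain ⟨q, hq, rfl⟩ := hp
          have hq2 := hbc q hq
          exact ⟨by omega, by omega, by omega⟩

lemma shiftA_true {i : ℕ} {a : List (ℕ × ℕ)} (ha : a ∈ PSet i) :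
    ∀ x ∈ a.map (fun p => (p.1 + 1, p.2)), Pb x = true := by
  intro x hx
  rw [List.mem_map] at hx
  obtain ⟨p, hp, rfl⟩ := hx
  have := ha.2 p hp
  simp only [Pb, decide_eq_true_eq]
  omega

lemma join_takedrop {n i : ℕ} {a b : List (ℕ × ℕ)} (ha : a ∈ PSet i) :
    (join n i (a, b)).takeWhile Pb = a.map (fun p => (p.1 + 1, p.2)) ∧
    (join n i (a, b)).dropWhile Pb
      = (if i = n then []
          else (i + 1, i + 1) :: b.map (fun p => (p.1 + (i + 1), p.2 + (i + 1)))) := by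
  by_cases hin : i = n
  · rw [join, if_pos hin, List.append_nil]
    exact takedrop_all Pb _ (shiftA_true ha)
  · rw [join, if_neg hin]
    exact takedrop_mid Pb _ _ _ (shiftA_true ha) (by simp [Pb])

/-- recover `i` from a joined list. -/
def marker (n : ℕ) (l : List (ℕ × ℕ)) : ℕ :=
  match l.dropWhile Pb with
  | [] => n
  | q :: _ => q.1 - 1

lemma marker_join {n i : ℕ} {a b : List (ℕ × ℕ)} (ha : a ∈ PSet i) :
    marker n (join n i (a, b)) = i := by
  rw [marker, (join_takedrop (n := n) (b := b) ha).2]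
  by_cases hin : i = n
  · rw [if_pos hin, hin]
  · rw [if_neg hin]
    simp

lemma join_injOn (n i : ℕ) : Set.InjOn (join n i) (PSet i ×ˢ PSet (n - i)) := by
  rintro ⟨a, b⟩ ⟨ha, hb⟩ ⟨a', b'⟩ ⟨ha', hb'⟩ heq
  have ht := (join_takedrop (n := n) (b := b) ha).1
  have ht' := (join_takedrop (n := n) (b := b') ha').1
  have hd := (join_takedrop (n := n) (b := b) ha).2
  have hd' := (join_takedrop (n := n) (b := b') ha').2
  rw [heq] at ht hd
  have haa : a = a' := by
    have h1 := ht.symm.trans ht'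
    exact List.map_injective_iff.2
      (fun p q hpq => by
        simp only [Prod.mk.injEq] at hpq
        exact Prod.ext (by omega) hpq.2) h1
  have hbb : b = b' := by
    have h2 := hd.symm.trans hd'
    by_cases hin : i = n
    · have hb0 : b ∈ PSet 0 := by rwa [hin, Nat.sub_self] at hb
      have hb0' : b' ∈ PSet 0 := by rwa [hin, Nat.sub_self] at hb'
      rw [PSet_zero] at hb0 hb0'
      rw [hb0, hb0']
    · rw [if_neg hin, if_neg hin] at h2
      have h3 := List.tail_eq_of_cons_eq h2
      exact List.map_injective_iff.2
        (fun p q hpq => by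
          simp only [Prod.mk.injEq] at hpq
          exact Prod.ext (by omega) (by omega)) h3
  rw [haa, hbb]

lemma join_surj {n : ℕ} {l : List (ℕ × ℕ)} (hl : l ∈ PSet (n + 1)) :
    ∃ i ≤ n, ∃ ab, ab ∈ PSet i ×ˢ PSet (n - i) ∧ join n i ab = l := by
  obtain ⟨hpw, hc⟩ := hl
  have hlAR : l.takeWhile Pb ++ l.dropWhile Pb = l := List.takeWhile_append_dropWhile
  set A := l.takeWhile Pb with hA
  set R := l.dropWhile Pb with hR
  have hAmem : ∀ x ∈ A, Pb x = true := fun x hx => List.mem_takeWhile_imp hx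
  have hAsub : ∀ x ∈ A, x ∈ l := fun x hx => by rw [← hlAR]; exact List.mem_append_left _ hx
  have hRsub : ∀ x ∈ R, x ∈ l := fun x hx => by rw [← hlAR]; exact List.mem_append_right _ hx
  have hsplit := hpw
  rw [← hlAR, List.pairwise_append] at hsplit
  obtain ⟨hApw, hRpw, hcross⟩ := hsplit
  cases hRdef : R with
  | nil =>
    refine ⟨n, le_refl n, (A.map (fun p => (p.1 - 1, p.2)), []), ⟨?_, ?_⟩, ?_⟩
    · constructor
      · rw [List.pairwise_map]
        refine hApw.imp_of_mem ?_
        intro p q hp hq hpq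
        have hp1 := hAmem p hp
        simp only [Pb, decide_eq_true_eq] at hp1
        have hpc := hc p (hAsub p hp)
        exact ⟨by omega, by omega⟩
      · intro p hp
        rw [List.mem_map] at hp
        obtain ⟨q, hq, rfl⟩ := hp
        have h1 := hAmem q hq
        simp only [Pb, decide_eq_true_eq] at h1
        have h2 := hc q (hAsub q hq)
        exact ⟨by omega, by omega, by omega⟩
    · rw [Nat.sub_self, PSet_zero]; rfl
    · rw [join, if_pos rfl, List.append_nil, List.map_map]
      have hcongr : ∀ p ∈ A, ((fun p : ℕ × ℕ => (p.1 + 1, p.2)) ∘ fun p : ℕ × ℕ => (p.1 - 1, p.2)) p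
          = id p := by
        intro p hp
        have h1 := hAmem p hp
        simp only [Pb, decide_eq_true_eq] at h1
        simp only [Function.comp_apply, id_eq]
        exact Prod.ext (by omega) rfl
      rw [List.map_congr_left hcongr, List.map_id, ← hlAR, hRdef, List.append_nil]
  | cons q B =>
    have hqmem : q ∈ l := hRsub q (by rw [hRdef]; exact List.mem_cons_self)
    have hqc := hc q hqmem
    have hqP : Pb q = false := dropWhile_head_false Pb l (by rw [← hR, hRdef])
    have hqP' : ¬ (q.2 < q.1) := by simpa [Pb] using hqP
    have hqval : q.2 = q.1 := by omega
    have hRpw' : (q :: B).Pairwise (fun a b : ℕ × ℕ => a.1 < b.1 ∧ a.2 < b.2) := by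
      rw [← hRdef]; exact hRpw
    rw [List.pairwise_cons] at hRpw'
    obtain ⟨hqB, hBpw⟩ := hRpw'
    refine ⟨q.1 - 1, by omega,
      (A.map (fun p => (p.1 - 1, p.2)), B.map (fun p => (p.1 - q.1, p.2 - q.1))), ⟨?_, ?_⟩, ?_⟩
    · constructor
      · rw [List.pairwise_map]
        refine hApw.imp_of_mem ?_
        intro p p' hp hp' hpq
        have h1 := hAmem p hp
        simp only [Pb, decide_eq_true_eq] at h1
        have h2 := hc p (hAsub p hp)
        exact ⟨by omega, by omega⟩
      · intro p hp
        rw [List.mem_map] at hp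
        obtain ⟨p', hp', rfl⟩ := hp
        have h1 := hAmem p' hp'
        simp only [Pb, decide_eq_true_eq] at h1
        have h2 := hc p' (hAsub p' hp')
        have h3 := hcross p' hp' q (by rw [hRdef]; exact List.mem_cons_self)
        exact ⟨by omega, by omega, by omega⟩
    · constructor
      · rw [List.pairwise_map]
        refine hBpw.imp_of_mem ?_
        intro p p' hp hp' hpq
        have h1 := hqB p hp
        exact ⟨by omega, by omega⟩
      · intro p hp
        rw [List.mem_map] at hp
        obtain ⟨p', hp', rfl⟩ := hp
        have h1 := hqB p' hp'
        have h2 := hc p' (hRsub p' (by rw [hRdef]; exact List.mem_cons_of_mem q hp'))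
        exact ⟨by omega, by omega, by omega⟩
    · rw [join]
      have hin : ¬ (q.1 - 1 = n) := by omega
      rw [if_neg hin, List.map_map, List.map_map]
      have he1 : ∀ p ∈ A, ((fun p : ℕ × ℕ => (p.1 + 1, p.2)) ∘ fun p : ℕ × ℕ => (p.1 - 1, p.2)) p
          = id p := by
        intro p hp
        have h1 := hAmem p hp
        simp only [Pb, decide_eq_true_eq] at h1
        simp only [Function.comp_apply, id_eq]
        exact Prod.ext (by omega) rfl
      have he2 : (q.1 - 1 + 1, q.1 - 1 + 1) = q := by
        have h1 : q.1 - 1 + 1 = q.1 := by omega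
        rw [h1]
        exact Prod.ext rfl hqval.symm
      have he3 : ∀ p ∈ B, ((fun p : ℕ × ℕ => (p.1 + (q.1 - 1 + 1), p.2 + (q.1 - 1 + 1))) ∘
          fun p : ℕ × ℕ => (p.1 - q.1, p.2 - q.1)) p = id p := by
        intro p hp
        have h1 := hqB p hp
        simp only [Function.comp_apply, id_eq]
        exact Prod.ext (by omega) (by omega)
      rw [List.map_congr_left he1, List.map_id, List.map_congr_left he3, List.map_id, he2,
        ← hlAR, hRdef]

lemma ncard_prod {α β : Type*} (s : Set α) (t : Set β) :
    (s ×ˢ t).ncard = s.ncard * t.ncard := by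
  rw [← Nat.card_coe_set_eq, ← Nat.card_coe_set_eq, ← Nat.card_coe_set_eq,
    Nat.card_congr (Equiv.Set.prod s t), Nat.card_prod]

lemma ncard_biUnion {α : Type*} (m : ℕ) (S : ℕ → Set α) (hfin : ∀ i < m, (S i).Finite)
    (hdisj : ∀ i < m, ∀ j < m, i ≠ j → Disjoint (S i) (S j)) :
    (⋃ i ∈ Finset.range m, S i).ncard = ∑ i ∈ Finset.range m, (S i).ncard := by
  induction m with
  | zero => simp
  | succ m ih =>
    rw [Finset.sum_range_succ, ← ih (fun i hi => hfin i (by omega))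
      (fun i hi j hj hij => hdisj i (by omega) j (by omega) hij)]
    rw [Finset.range_add_one, Finset.set_biUnion_insert]
    rw [Set.ncard_union_eq ?disj ?fin1 ?fin2]
    case disj =>
      rw [Set.disjoint_iUnion₂_right]
      intro i hi
      exact hdisj m (by omega) i (by
        rw [Finset.mem_range] at hi; omega) (by
        rw [Finset.mem_range] at hi; omega)
    case fin1 => exact hfin m (by omega)
    case fin2 =>
      apply Set.Finite.biUnion (Finset.range m).finite_toSet
      intro i hi
      rw [Finset.mem_coe, Finset.mem_range] at hi
      exact hfin i (by omega)
    omega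

lemma PSet_finite' (n : ℕ) : (PSet n).Finite := by
  cases n with
  | zero => rw [PSet_zero]; exact Set.finite_singleton _
  | succ m => exact PSet_finite (m + 1) (by omega)

lemma PSet_ncard : ∀ n, (PSet n).ncard = catalan n := by
  intro n
  induction n using Nat.strong_induction_on with
  | _ n ih =>
    rcases n with _ | m
    · rw [PSet_zero, Set.ncard_singleton, catalan_zero]
    · have hunion : PSet (m + 1)
          = ⋃ i ∈ Finset.range (m + 1), join m i '' (PSet i ×ˢ PSet (m - i)) := by
        apply Set.Subset.antisymm
        · intro l hl
          obtain ⟨i, hi, ab, hab, habeq⟩ := join_surj hl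
          exact Set.mem_biUnion (Finset.mem_range.2 (by omega)) ⟨ab, hab, habeq⟩
        · intro l hl
          rw [Set.mem_iUnion₂] at hl
          obtain ⟨i, hi, ab, hab, rfl⟩ := hl
          rw [Finset.mem_range] at hi
          obtain ⟨a, b⟩ := ab
          exact join_mem (by omega) hab.1 hab.2
      rw [hunion, ncard_biUnion]
      · have hterm : ∀ i ∈ Finset.range (m + 1),
            (join m i '' (PSet i ×ˢ PSet (m - i))).ncard = catalan i * catalan (m - i) := by
          intro i hi
          rw [Finset.mem_range] at hi
          rw [Set.ncard_image_of_injOn (join_injOn m i), ncard_prod,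
            ih i (by omega), ih (m - i) (by omega)]
        rw [Finset.sum_congr rfl hterm, catalan_succ]
        rw [Fin.sum_univ_eq_sum_range (fun i => catalan i * catalan (m - i))]
      · intro i hi
        exact Set.Finite.image _ ((PSet_finite' i).prod (PSet_finite' (m - i)))
      · intro i hi j hj hij
        rw [Set.disjoint_left]
        rintro l ⟨ab, hab, rfl⟩ ⟨ab', hab', heq⟩
        obtain ⟨a, b⟩ := ab
        obtain ⟨a', b'⟩ := ab'
        have h1 : marker m (join m i (a, b)) = i := marker_join hab.1
        have h2 : marker m (join m j (a', b')) = j := marker_join hab'.1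
        rw [heq, h1] at h2
        exact hij h2

end AV

theorem stmt_9 (n : ℕ) :
    {π : Equiv.Perm (Fin (n + 1)) | Avoids321 π}.ncard = catalan (n + 1) := by
  rw [AV.PSet_ncard_eq, AV.PSet_ncard]
end

section
/- For all $n, d \ge 0$, the number of 321-avoiding permutations of $\{1,\ldots,n+1\}$ with exactly $d$ inversions equals the number of Dyck paths of length $2(n+1)$ for which the sum of the heights of the peaks minus the number of peaks is $d$. -/
/-- The number of inversions of a permutation. -/
def inversions {n : ℕ} (π : Equiv.Perm (Fin n)) : ℕ :=
  (Finset.univ.filter fun ij : Fin n × Fin n => ij.1 < ij.2 ∧ π ij.2 < π ij.1).card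

open List Finset

def encode : List ℕ → List Bool
  | [] => []
  | a :: t => List.replicate a true ++ false :: encode t

@[simp] lemma encode_nil : encode [] = [] := rfl
@[simp] lemma encode_cons (a t) : encode (a :: t) = List.replicate a true ++ false :: encode t := rfl

@[simp] lemma count_true_encode (c : List ℕ) : (encode c).count true = c.sum := by
  induction c with
  | nil => simp
  | cons a t ih => simp [List.count_append, ih]

@[simp] lemma count_false_encode (c : List ℕ) : (encode c).count false = c.length := by
  induction c with
  | nil => simp
  | cons a t ih => simp [List.count_append, List.count_replicate, ih]

@[simp] lemma length_encode (c : List ℕ) : (encode c).length = c.sum + c.length := by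
  induction c with
  | nil => simp
  | cons a t ih => simp [ih]; ring

lemma encode_append (u v : List ℕ) : encode (u ++ v) = encode u ++ encode v := by
  induction u with
  | nil => simp
  | cons a t ih => simp [ih]

def decode : List Bool → List ℕ
  | [] => []
  | false :: t => 0 :: decode t
  | true :: t => match decode t with
    | [] => []
    | a :: r => (a+1) :: r

@[simp] lemma decode_encode (c : List ℕ) : decode (encode c) = c := by
  induction c with
  | nil => rfl
  | cons a t ih =>
    induction a with
    | zero => simpa [decode] using ih
    | succ b ihb =>
      have hb : decode (encode (b :: t)) = b :: t := ihb
      simp only [encode_cons] at hb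
      simp only [encode_cons, List.replicate_succ, List.cons_append, decode]
      rw [hb]

lemma length_decode (w : List Bool) : (decode w).length = w.count false := by
  induction w with
  | nil => rfl
  | cons x t ih =>
    cases x with
    | false => simp [decode, ih]
    | true =>
      simp only [decode]
      rcases h : decode t with _ | ⟨a, r⟩ <;> simp_all [decode]

lemma encode_decode (w : List Bool) (hw : w.getLast? = some false) : encode (decode w) = w := by
  induction w with
  | nil => simp at hw
  | cons x t ih =>
    cases t with
    | nil =>
      cases x with
      | false => rfl
      | true => simp at hw
    | cons y s =>
      rw [List.getLast?_cons_cons] at hw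
      have ht := ih hw
      cases x with
      | false => simp [decode, ht]
      | true =>
        have hne : decode (y :: s) ≠ [] := by
          have hmem : false ∈ (y :: s) := List.mem_of_getLast? hw
          have : (y :: s).count false ≠ 0 :=
            Nat.one_le_iff_ne_zero.mp (List.count_pos_iff.mpr hmem)
          intro h
          rw [← length_decode] at this
          simp [h] at this
        rcases h : decode (y :: s) with _ | ⟨a, r⟩
        · exact absurd h hne
        · simp only [decode, h]
          rw [h] at ht
          simpa [List.replicate_succ] using ht

lemma encode_take (c : List ℕ) (j : ℕ) :
    (encode c).take ((c.take j).sum + j) = encode (c.take j) := by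
  rcases le_or_gt j c.length with h | h
  · conv_lhs => rw [← List.take_append_drop j c, encode_append]
    exact List.take_left' (by simp [List.length_take, min_eq_left h])
  · rw [List.take_of_length_le h.le, List.take_of_length_le (by simp; omega)]

lemma getElemOptD (c : List ℕ) (j : ℕ) (h : j < c.length) :
    getElem? c j = some (c.getD j 0) := by
  rw [List.getElem?_eq_getElem h, List.getD_eq_getElem c 0 h]

lemma take_sum_succ (c : List ℕ) (j : ℕ) (h : j < c.length) :
    (c.take (j+1)).sum = (c.take j).sum + c.getD j 0 := by
  rw [List.take_succ, getElemOptD c j h]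
  simp

lemma encode_take_mid (c : List ℕ) (j : ℕ) (h : j < c.length) :
    (encode c).take ((c.take (j+1)).sum + j) =
      encode (c.take j) ++ List.replicate (c.getD j 0) true := by
  have hsum := take_sum_succ c j h
  have hdecomp : encode c =
      (encode (c.take j) ++ List.replicate (c.getD j 0) true) ++ (false :: encode (c.drop (j+1))) := by
    conv_lhs => rw [← List.take_append_drop (j+1) c, encode_append, List.take_succ,
      getElemOptD c j h]
    simp [encode_append]
  have hlen : (encode (c.take j) ++ List.replicate (c.getD j 0) true).length
      = (c.take (j+1)).sum + j := by
    simp [List.length_take, min_eq_left h.le, hsum]; ring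
  rw [hdecomp, List.take_left' hlen]

lemma ballot_of (c : List ℕ) (o : ℕ) (h : ∀ i ≤ c.length, i ≤ (c.take i).sum + o) :
    ∀ k, ((encode c).take k).count false ≤ ((encode c).take k).count true + o := by
  induction c generalizing o with
  | nil => intro k; simp
  | cons a t ih =>
    intro k
    have ha : 1 ≤ a + o := by
      have := h 1 (by simp)
      simpa using this
    rcases le_or_gt k a with hk | hk
    · rw [encode_cons, List.take_append_of_le_length (by simpa using hk)]
      simp [List.take_replicate, List.count_replicate, min_eq_left hk]
    · have hdec : (encode (a :: t)).take k =
          (List.replicate a true ++ [false]) ++ (encode t).take (k - a - 1) := by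
        rw [encode_cons]
        have : List.replicate a true ++ false :: encode t =
            (List.replicate a true ++ [false]) ++ encode t := by simp
        rw [this]
        rw [List.take_append, List.take_of_length_le (by simp; omega)]
        congr 1
        congr 1
        simp; omega
      rw [hdec]
      have ih' := ih (o + a - 1) (by
        intro i hi
        have := h (i+1) (by simpa using hi)
        have h1 : (List.take (i+1) (a :: t)).sum = a + (t.take i).sum := by simp
        omega) (k - a - 1)
      simp only [List.count_append, List.count_replicate]
      simp only [List.count_singleton]
      simp at *
      omega

lemma prefix_ge_of_ballot (c : List ℕ)
    (hb : ∀ k, ((encode c).take k).count false ≤ ((encode c).take k).count true)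
    (i : ℕ) (hi : i ≤ c.length) : i ≤ (c.take i).sum := by
  have := hb ((c.take i).sum + i)
  rw [encode_take] at this
  simpa [min_eq_left hi] using this

lemma mem_peakIdx {w : List Bool} {i : ℕ} :
    i ∈ peakIdx w ↔ w[i]? = some true ∧ w[i+1]? = some false := by
  simp only [peakIdx, Finset.mem_filter, Finset.mem_range, and_iff_right_iff_imp]
  intro h
  exact (List.getElem?_eq_some_iff.mp h.1).1

lemma get?_block (a : ℕ) (w : List Bool) (i : ℕ) :
    (List.replicate a true ++ false :: w)[i]? =
      if i < a then some true else if i = a then some false else w[i - a - 1]? := by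
  split_ifs with h1 h2
  · rw [List.getElem?_append_left (by simpa using h1)]
    simp [h1]
  · subst h2
    rw [List.getElem?_append_right (by simp)]
    simp
  · rw [List.getElem?_append_right (by simp; omega)]
    have h3 : i - (List.replicate a true).length = (i - a - 1) + 1 := by simp; omega
    rw [h3, List.getElem?_cons_succ]

lemma sum_take_mono (c : List ℕ) {x y : ℕ} (h : x ≤ y) :
    (c.take x).sum ≤ (c.take y).sum := by
  have : c.take y = c.take x ++ (c.drop x).take (y - x) := by
    rw [← List.take_add]
    congr 1
    omega
  rw [this, List.sum_append]
  omega

lemma peak_encode (c : List ℕ) (i : ℕ) :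
    i ∈ peakIdx (encode c) ↔
      ∃ j, j < c.length ∧ c.getD j 0 ≠ 0 ∧ i + 1 = (c.take (j+1)).sum + j := by
  induction c generalizing i with
  | nil => simp [peakIdx, encode]
  | cons a t ih =>
    have hsum : ∀ j, ((a::t).take (j+1)).sum = a + (t.take j).sum := by
      intro j; simp [List.take_succ_cons]
    constructor
    · intro hp
      rw [mem_peakIdx, encode_cons, get?_block, get?_block] at hp
      obtain ⟨h1, h2⟩ := hp
      by_cases hia : i < a
      · have hi1 : i + 1 = a := by
          by_contra hne
          rw [if_pos (by omega)] at h2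
          simp at h2
        refine ⟨0, by simp, by simp [List.getD_cons_zero]; omega, by rw [hsum 0]; simp; omega⟩
      · have hi : a < i := by
          by_contra h'
          have : i = a := by omega
          rw [if_neg (by omega), if_pos this] at h1
          simp at h1
        rw [if_neg (by omega), if_neg (by omega)] at h1
        rw [if_neg (by omega), if_neg (by omega)] at h2
        have e1 : i + 1 - a - 1 = (i - a - 1) + 1 := by omega
        rw [e1] at h2
        obtain ⟨j', hj', hne, heq⟩ := (ih (i - a - 1)).mp (mem_peakIdx.mpr ⟨h1, h2⟩)
        refine ⟨j'+1, by simpa using hj', by simpa using hne, ?_⟩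
        rw [hsum (j'+1)]
        omega
    · rintro ⟨j, hj, hne, heq⟩
      rw [mem_peakIdx, encode_cons, get?_block, get?_block]
      match j with
      | 0 =>
        rw [hsum 0] at heq
        simp only [List.take_zero, List.sum_nil, add_zero] at heq
        rw [if_pos (by omega), if_neg (by omega), if_pos (by omega)]
        exact ⟨rfl, rfl⟩
      | j'+1 =>
        rw [hsum (j'+1)] at heq
        have hne' : t.getD j' 0 ≠ 0 := by simpa using hne
        have hj'' : j' < t.length := by simpa using hj
        have hS : 1 ≤ (t.take (j'+1)).sum := by
          have h2 := take_sum_succ t j' hj''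
          omega
        have hia : a < i := by omega
        rw [if_neg (by omega), if_neg (by omega), if_neg (by omega), if_neg (by omega)]
        have hmem := (ih (i - a - 1)).mpr ⟨j', hj'', hne', by omega⟩
        rw [mem_peakIdx] at hmem
        have e1 : i + 1 - a - 1 = (i - a - 1) + 1 := by omega
        rw [e1]
        exact hmem

def statSum (c : List ℕ) : ℕ :=
  ∑ j ∈ (Finset.range c.length).filter (fun j => c.getD j 0 ≠ 0), ((c.take (j+1)).sum - (j+1))

lemma dstat_encode (c : List ℕ) : dstat (encode c) = statSum c := by
  have himage : peakIdx (encode c) =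
      ((Finset.range c.length).filter (fun j => c.getD j 0 ≠ 0)).image
        (fun j => (c.take (j+1)).sum + j - 1) := by
    ext i
    rw [peak_encode]
    simp only [Finset.mem_image, Finset.mem_filter, Finset.mem_range]
    constructor
    · rintro ⟨j, hj, hne, heq⟩
      exact ⟨j, ⟨hj, hne⟩, by omega⟩
    · rintro ⟨j, ⟨hj, hne⟩, heq⟩
      have hS : 1 ≤ (c.take (j+1)).sum := by
        have := take_sum_succ c j hj; omega
      exact ⟨j, hj, hne, by omega⟩
  have hinj : ∀ x ∈ (Finset.range c.length).filter (fun j => c.getD j 0 ≠ 0),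
      ∀ y ∈ (Finset.range c.length).filter (fun j => c.getD j 0 ≠ 0),
      (c.take (x+1)).sum + x - 1 = (c.take (y+1)).sum + y - 1 → x = y := by
    intro x hx y hy hxy
    simp only [Finset.mem_filter, Finset.mem_range] at hx hy
    have hSx : 1 ≤ (c.take (x+1)).sum := by have := take_sum_succ c x hx.1; omega
    have hSy : 1 ≤ (c.take (y+1)).sum := by have := take_sum_succ c y hy.1; omega
    rcases lt_trichotomy x y with h | h | h
    · have := sum_take_mono c (show x+1 ≤ y+1 by omega)
      omega
    · exact h
    · have := sum_take_mono c (show y+1 ≤ x+1 by omega)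
      omega
  rw [dstat, himage, Finset.sum_image hinj]
  apply Finset.sum_congr rfl
  intro j hj
  simp only [Finset.mem_filter, Finset.mem_range] at hj
  have hts := take_sum_succ c j hj.1
  have hS : 1 ≤ (c.take (j+1)).sum := by omega
  have e1 : (c.take (j+1)).sum + j - 1 + 1 = (c.take (j+1)).sum + j := by omega
  rw [e1, height, encode_take_mid c j hj.1]
  have hcf : (encode (c.take j) ++ List.replicate (c.getD j 0) true).count false = j := by
    simp [List.count_append, List.count_replicate, min_eq_left hj.1.le]
  have hct : (encode (c.take j) ++ List.replicate (c.getD j 0) true).count true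
      = (c.take (j+1)).sum := by
    simp [List.count_append, List.count_replicate, hts]
  rw [hcf, hct]
  omega


variable {m : ℕ}

def Mfun (π : Equiv.Perm (Fin m)) (k : ℕ) : ℕ :=
  (Finset.range k).sup (fun j => if h : j < m then (π ⟨j, h⟩ : ℕ) + 1 else 0)

@[simp] lemma Mfun_zero (π : Equiv.Perm (Fin m)) : Mfun π 0 = 0 := by simp [Mfun]

lemma Mfun_succ (π : Equiv.Perm (Fin m)) (k : ℕ) (hk : k < m) :
    Mfun π (k+1) = max (Mfun π k) ((π ⟨k, hk⟩ : ℕ) + 1) := by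
  rw [Mfun, Finset.range_add_one, Finset.sup_insert, dif_pos hk, Mfun]
  exact sup_comm _ _

lemma Mfun_mono (π : Equiv.Perm (Fin m)) : Monotone (Mfun π) := by
  intro a b hab
  exact Finset.sup_mono (Finset.range_subset_range.mpr hab)

lemma term_le_Mfun (π : Equiv.Perm (Fin m)) {j k : ℕ} (hjk : j < k) (hj : j < m) :
    (π ⟨j, hj⟩ : ℕ) + 1 ≤ Mfun π k := by
  have := Finset.le_sup (f := fun j => if h : j < m then (π ⟨j, h⟩ : ℕ) + 1 else 0)
    (Finset.mem_range.mpr hjk)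
  simp only [dif_pos hj] at this
  exact this

lemma Mfun_le (π : Equiv.Perm (Fin m)) (k : ℕ) (hk : k ≤ m) : Mfun π k ≤ m := by
  apply Finset.sup_le
  intro j hj
  rw [Finset.mem_range] at hj
  rw [dif_pos (lt_of_lt_of_le hj hk)]
  exact (π ⟨j, _⟩).isLt

lemma exists_eq_Mfun (π : Equiv.Perm (Fin m)) (k : ℕ) (hk : k ≤ m) (h : 0 < Mfun π k) :
    ∃ j, ∃ hj : j < m, j < k ∧ (π ⟨j, hj⟩ : ℕ) + 1 = Mfun π k := by
  have hne : (Finset.range k).Nonempty := by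
    rcases Nat.eq_zero_or_pos k with rfl | hk0
    · simp [Mfun] at h
    · exact Finset.nonempty_range_iff.mpr (by omega)
  obtain ⟨j, hjmem, hj⟩ := Finset.exists_mem_eq_sup (Finset.range k) hne
    (fun j => if h : j < m then (π ⟨j, h⟩ : ℕ) + 1 else 0)
  rw [Finset.mem_range] at hjmem
  have hjm : j < m := lt_of_lt_of_le hjmem hk
  refine ⟨j, hjm, hjmem, ?_⟩
  rw [Mfun, hj, dif_pos hjm]

lemma card_filter_lt (K : ℕ) (h : K ≤ m) :
    ((Finset.univ : Finset (Fin m)).filter fun j : Fin m => (j : ℕ) < K).card = K := by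
  have himg : ((Finset.univ : Finset (Fin m)).filter fun j : Fin m => (j : ℕ) < K)
      = (Finset.univ : Finset (Fin K)).image (Fin.castLE h) := by
    ext x
    simp only [Finset.mem_filter, Finset.mem_univ, true_and, Finset.mem_image]
    constructor
    · intro hx; exact ⟨⟨x, hx⟩, rfl⟩
    · rintro ⟨k, rfl⟩; exact k.isLt
  rw [himg, Finset.card_image_of_injective _ (Fin.castLE_injective h)]
  simp

lemma le_Mfun (π : Equiv.Perm (Fin m)) (k : ℕ) (hk : k ≤ m) : k ≤ Mfun π k := by
  by_contra hlt
  push_neg at hlt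
  set K := Mfun π k with hK
  have himg : ((Finset.univ : Finset (Fin m)).filter fun j : Fin m => (j : ℕ) < k).image π ⊆
      (Finset.univ : Finset (Fin m)).filter fun v : Fin m => (v : ℕ) < K := by
    intro v hv
    rw [Finset.mem_image] at hv
    obtain ⟨j, hj, rfl⟩ := hv
    rw [Finset.mem_filter] at hj
    have := term_le_Mfun π (k := k) hj.2 j.isLt
    simp only [Fin.eta] at this
    rw [Finset.mem_filter]
    exact ⟨Finset.mem_univ _, by omega⟩
  have h1 := Finset.card_le_card himg
  rw [Finset.card_image_of_injective _ π.injective, card_filter_lt k hk,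
    card_filter_lt K (le_trans hlt.le hk)] at h1
  omega

lemma Mfun_top (π : Equiv.Perm (Fin m)) : Mfun π m = m :=
  le_antisymm (Mfun_le π m le_rfl) (le_Mfun π m le_rfl)

lemma inversions_eq_sum (π : Equiv.Perm (Fin m)) :
    inversions π = ∑ i : Fin m,
      ((Finset.univ.filter fun j : Fin m => i < j ∧ π j < π i).card) := by
  rw [inversions]
  rw [Finset.card_eq_sum_card_fiberwise
    (f := Prod.fst) (t := Finset.univ) (fun p _ => Finset.mem_univ _)]
  apply Finset.sum_congr rfl
  intro i _
  apply Finset.card_bij (fun p _ => p.2)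
  · rintro p hp
    simp only [Finset.mem_filter, Finset.mem_univ, true_and] at hp ⊢
    obtain ⟨⟨h1, h2⟩, h3⟩ := hp
    subst h3
    exact ⟨h1, h2⟩
  · rintro p hp q hq hpq
    simp only [Finset.mem_filter] at hp hq
    exact Prod.ext (hp.2.trans hq.2.symm) hpq
  · intro j hj
    simp only [Finset.mem_filter, Finset.mem_univ, true_and] at hj
    refine ⟨(i, j), ?_, rfl⟩
    rw [Finset.mem_filter, Finset.mem_filter]
    exact ⟨⟨Finset.mem_univ _, hj.1, hj.2⟩, rfl⟩

lemma card_inv_newmax (π : Equiv.Perm (Fin m)) (i : Fin m) (hnm : Mfun π i ≤ (π i : ℕ)) :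
    (Finset.univ.filter fun j : Fin m => i < j ∧ π j < π i).card = (π i : ℕ) - (i : ℕ) := by
  have hBcard : (Finset.univ.filter fun j : Fin m => π j < π i).card = (π i : ℕ) := by
    have himg : (Finset.univ.filter fun j : Fin m => π j < π i) =
        (Finset.univ.filter fun v : Fin m => (v : ℕ) < (π i : ℕ)).image π.symm := by
      ext j
      simp only [Finset.mem_filter, Finset.mem_univ, true_and, Finset.mem_image]
      constructor
      · intro hj; exact ⟨π j, Fin.lt_def.mp hj, π.symm_apply_apply j⟩
      · rintro ⟨v, hv, rfl⟩
        rw [Fin.lt_def]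
        simpa using hv
    rw [himg, Finset.card_image_of_injective _ π.symm.injective,
      card_filter_lt _ (π i).isLt.le]
  have hsub : (Finset.univ.filter fun j : Fin m => j < i) ⊆
      (Finset.univ.filter fun j : Fin m => π j < π i) := by
    intro j hj
    simp only [Finset.mem_filter, Finset.mem_univ, true_and] at hj ⊢
    have := term_le_Mfun π (k := (i : ℕ)) (Fin.lt_def.mp hj) j.isLt
    simp only [Fin.eta] at this
    rw [Fin.lt_def]
    omega
  have hsplit : (Finset.univ.filter fun j : Fin m => π j < π i) =
      (Finset.univ.filter fun j : Fin m => j < i) ∪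
        (Finset.univ.filter fun j : Fin m => i < j ∧ π j < π i) := by
    ext j
    simp only [Finset.mem_union, Finset.mem_filter, Finset.mem_univ, true_and]
    constructor
    · intro hj
      rcases lt_trichotomy j i with h | h | h
      · exact Or.inl h
      · exact absurd (h ▸ hj) (lt_irrefl _)
      · exact Or.inr ⟨h, hj⟩
    · rintro (h | ⟨h1, h2⟩)
      · have := hsub (by simp [h] : j ∈ _)
        simpa using this
      · exact h2
  have hdisj : Disjoint (Finset.univ.filter fun j : Fin m => j < i)
      (Finset.univ.filter fun j : Fin m => i < j ∧ π j < π i) := by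
    rw [Finset.disjoint_filter]
    intro j _ hj ⟨hj2, _⟩
    exact absurd (hj.trans hj2) (lt_irrefl _)
  have hicard : (Finset.univ.filter fun j : Fin m => j < i).card = (i : ℕ) := by
    rw [show (Finset.univ.filter fun j : Fin m => j < i)
        = Finset.univ.filter (fun j : Fin m => (j : ℕ) < (i : ℕ)) from
      Finset.filter_congr (fun j _ => by exact Fin.lt_def)]
    exact card_filter_lt _ i.isLt.le
  rw [hsplit, Finset.card_union_of_disjoint hdisj, hicard] at hBcard
  omega

lemma card_inv_notmax (π : Equiv.Perm (Fin m)) (hav : Avoids321 π) (i : Fin m)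
    (hnm : (π i : ℕ) < Mfun π i) :
    (Finset.univ.filter fun j : Fin m => i < j ∧ π j < π i).card = 0 := by
  rw [Finset.card_eq_zero, Finset.filter_eq_empty_iff]
  intro j _
  rintro ⟨hij, hji⟩
  obtain ⟨i', hi'm, hi'lt, hi'⟩ := exists_eq_Mfun π i i.isLt.le (by omega)
  apply hav
  have hne : (π ⟨i', hi'm⟩ : ℕ) ≠ (π i : ℕ) := by
    intro h
    have h2 : π ⟨i', hi'm⟩ = π i := Fin.ext h
    have := π.injective h2
    rw [Fin.ext_iff] at this
    simp at this
    omega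
  refine ⟨⟨i', hi'm⟩, i, j, Fin.lt_def.mpr hi'lt, hij, hji, Fin.lt_def.mpr (by omega)⟩

lemma inversions_eq (π : Equiv.Perm (Fin m)) (hav : Avoids321 π) :
    inversions π = ∑ i ∈ Finset.univ.filter (fun i : Fin m => Mfun π ↑i < Mfun π (↑i+1)),
      (Mfun π (↑i+1) - (↑i+1)) := by
  rw [inversions_eq_sum, ← Finset.sum_filter_add_sum_filter_not Finset.univ
    (fun i : Fin m => Mfun π ↑i < Mfun π (↑i+1))]
  have h2 : ∑ i ∈ Finset.univ.filter (fun i : Fin m => ¬ (Mfun π ↑i < Mfun π (↑i+1))),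
      ((Finset.univ.filter fun j : Fin m => i < j ∧ π j < π i).card) = 0 := by
    apply Finset.sum_eq_zero
    intro i hi
    simp only [Finset.mem_filter, Finset.mem_univ, true_and] at hi
    rw [Mfun_succ π _ i.isLt] at hi
    simp only [Fin.eta] at hi
    exact card_inv_notmax π hav i (by omega)
  rw [h2, add_zero]
  apply Finset.sum_congr rfl
  intro i hi
  simp only [Finset.mem_filter, Finset.mem_univ, true_and] at hi
  rw [Mfun_succ π _ i.isLt] at hi ⊢
  simp only [Fin.eta] at hi ⊢
  have hle : Mfun π ↑i ≤ (π i : ℕ) := by omega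
  rw [card_inv_newmax π i hle]
  omega

lemma no_smaller_later (π : Equiv.Perm (Fin m)) (hav : Avoids321 π) (i k : Fin m)
    (hik : i < k) (hnm : (π i : ℕ) + 1 ≤ Mfun π ↑i) (hlt : π k < π i) : False := by
  obtain ⟨i', hi'm, hi'lt, hi'⟩ := exists_eq_Mfun π ↑i i.isLt.le (by omega)
  have hne : (π ⟨i', hi'm⟩ : ℕ) ≠ (π i : ℕ) := by
    intro h'
    have h2 : π ⟨i', hi'm⟩ = π i := Fin.ext h'
    have := π.injective h2
    rw [Fin.ext_iff] at this
    simp at this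
    omega
  exact hav ⟨⟨i', hi'm⟩, i, k, Fin.lt_def.mpr hi'lt, hik, hlt, Fin.lt_def.mpr (by omega)⟩

lemma perm_eq_of_Mfun_eq (π σ : Equiv.Perm (Fin m)) (hπ : Avoids321 π) (hσ : Avoids321 σ)
    (h : ∀ k, Mfun π k = Mfun σ k) : π = σ := by
  have key : ∀ v : ℕ, ∀ hv : v < m, π ⟨v, hv⟩ = σ ⟨v, hv⟩ := by
    intro v
    induction v using Nat.strong_induction_on with
    | _ v IH =>
    intro hv
    set i : Fin m := ⟨v, hv⟩ with hidef
    have hMπ := Mfun_succ π v hv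
    have hMσ := Mfun_succ σ v hv
    rw [← hidef] at hMπ hMσ
    by_cases hnew : Mfun π v ≤ (π i : ℕ)
    · -- new max for π, so also for σ
      have h1 : Mfun π (v+1) = (π i : ℕ) + 1 := by rw [hMπ]; omega
      have h2 : Mfun σ (v+1) = max (Mfun σ v) ((σ i : ℕ) + 1) := hMσ
      have h3 : Mfun σ v < Mfun σ (v+1) := by
        rw [← h, ← h, h1]; omega
      have h4 : Mfun σ (v+1) = (σ i : ℕ) + 1 := by omega
      apply Fin.ext
      have := h (v+1)
      omega
    · -- not new max for π; then not for σ either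
      push_neg at hnew
      have h1 : Mfun π (v+1) = Mfun π v := by rw [hMπ]; omega
      have hσnew : (σ i : ℕ) + 1 ≤ Mfun σ v := by
        by_contra h'
        push_neg at h'
        have : Mfun σ (v+1) = (σ i : ℕ) + 1 := by rw [hMσ]; omega
        have := h (v+1)
        have hh := h v
        omega
      -- both non-new-max: show values equal via 321-avoidance
      have hprev : ∀ j : Fin m, (j : ℕ) < v → π j = σ j := by
        intro j hj
        have := IH (j : ℕ) hj j.isLt
        simpa using this
      by_contra hne
      have hne' : π i ≠ σ i := hne
      -- helper applied to both orders
      have main : ∀ (τ ρ : Equiv.Perm (Fin m)), Avoids321 τ →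
          (∀ j : Fin m, (j : ℕ) < v → τ j = ρ j) →
          ((τ i : ℕ) + 1 ≤ Mfun τ v) → ρ i < τ i → False := by
        intro τ ρ havτ hpr hτn hρτ
        set k : Fin m := τ.symm (ρ i) with hk
        have hτk : τ k = ρ i := τ.apply_symm_apply _
        have hki : k ≠ i := by
          intro h'
          have h2 : τ i = ρ i := h' ▸ hτk
          rw [h2] at hρτ
          exact lt_irrefl _ hρτ
        rcases lt_trichotomy (k : ℕ) v with hkv | hkv | hkv
        · have := hpr k hkv
          have : τ k = ρ k := this
          rw [hτk] at this
          have := ρ.injective this.symm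
          rw [Fin.ext_iff] at this
          simp [hidef] at this
          omega
        · exact hki (Fin.ext hkv)
        · have hik : i < k := Fin.lt_def.mpr (by simpa [hidef] using hkv)
          have : τ k < τ i := by rw [hτk]; exact hρτ
          exact no_smaller_later τ havτ i k hik (by simpa [hidef] using hτn) this
      rcases lt_or_gt_of_ne hne' with hlt | hlt
      · exact main σ π hσ (fun j hj => (hprev j hj).symm) hσnew hlt
      · exact main π σ hπ hprev (by simpa [hidef] using hnew) hlt
  exact Equiv.ext (fun x => by have := key x.val x.isLt; simpa using this)

lemma card_lt_iso (s : Finset (Fin m)) {p : ℕ} (hs : s.card = p) (r : Fin p) :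
    (s.filter (fun x => x < (s.orderIsoOfFin hs r : Fin m))).card = (r : ℕ) := by
  have himg : s.filter (fun x => x < (s.orderIsoOfFin hs r : Fin m)) =
      (Finset.univ.filter (fun k : Fin p => k < r)).image
        (fun k => (s.orderIsoOfFin hs k : Fin m)) := by
    ext x
    simp only [Finset.mem_filter, Finset.mem_univ, true_and, Finset.mem_image]
    constructor
    · rintro ⟨hxs, hxlt⟩
      refine ⟨(s.orderIsoOfFin hs).symm ⟨x, hxs⟩, ?_, by simp⟩
      rw [← (s.orderIsoOfFin hs).lt_iff_lt, ← Subtype.coe_lt_coe]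
      simpa using hxlt
    · rintro ⟨k, hk, rfl⟩
      refine ⟨(s.orderIsoOfFin hs k).2, ?_⟩
      exact_mod_cast (s.orderIsoOfFin hs).lt_iff_lt.mpr hk
  rw [himg, Finset.card_image_of_injective _
    (fun a b hab => (s.orderIsoOfFin hs).injective (Subtype.coe_injective hab))]
  rw [show (Finset.univ.filter (fun k : Fin p => k < r))
      = Finset.univ.filter (fun k : Fin p => (k : ℕ) < (r : ℕ)) from
    Finset.filter_congr (fun k _ => by exact Fin.lt_def)]
  exact card_filter_lt _ r.isLt.le


section Construction

variable (b : ℕ → ℕ)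

lemma exists_perm (b : ℕ → ℕ) (hmono : Monotone b) (h0 : b 0 = 0)
    (hge : ∀ k, k ≤ m → k ≤ b k) (htop : b m = m) :
    ∃ π : Equiv.Perm (Fin m), Avoids321 π ∧ ∀ k, k ≤ m → Mfun π k = b k := by
  classical
  have hbm : ∀ k, k ≤ m → b k ≤ m := fun k hk => htop ▸ hmono hk
  set T : Finset (Fin m) := Finset.univ.filter (fun j : Fin m => b ↑j < b (↑j+1)) with hTdef
  have hmemT : ∀ j : Fin m, j ∈ T ↔ b ↑j < b (↑j+1) := by
    intro j
    rw [hTdef, Finset.mem_filter]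
    simp
  set t : ℕ → ℕ := fun a => (T.filter (fun j : Fin m => (j : ℕ) < a)).card with htdef
  have hbv : ∀ j : Fin m, b (↑j+1) - 1 < m := by
    intro j
    have h1 : b (↑j+1) ≤ m := hbm _ j.isLt
    have h2 : (0:ℕ) < m := by have := j.isLt; omega
    omega
  set mv : Fin m → Fin m := fun j => ⟨b (↑j+1) - 1, hbv j⟩ with hmvdef
  set V : Finset (Fin m) := T.image mv with hVdef
  set W : Finset (Fin m) := Vᶜ with hWdef
  -- mv injective on T
  have hmvinj : ∀ i ∈ T, ∀ j ∈ T, mv i = mv j → i = j := by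
    intro i hi j hj hij
    rw [hTdef, Finset.mem_filter] at hi hj
    have hvi : b (↑i+1) - 1 = b (↑j+1) - 1 := congrArg Fin.val hij
    rcases lt_trichotomy (i : ℕ) (j : ℕ) with h | h | h
    · exfalso
      have : b (↑i+1) ≤ b ↑j := hmono (by omega)
      omega
    · exact Fin.ext h
    · exfalso
      have : b (↑j+1) ≤ b ↑i := hmono (by omega)
      omega
  have hVcard : V.card = T.card := Finset.card_image_of_injOn hmvinj
  have hWcard : W.card = m - T.card := by
    rw [hWdef, Finset.card_compl, hVcard]
    simp
  -- counting T above a position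
  have ht_le : ∀ a : ℕ, a ≤ m → t a ≤ a := by
    intro a ha
    rw [htdef]
    calc (T.filter (fun j : Fin m => (j : ℕ) < a)).card
        ≤ (Finset.univ.filter (fun j : Fin m => (j : ℕ) < a)).card :=
          Finset.card_le_card (Finset.filter_subset_filter _ (Finset.subset_univ _))
      _ = a := card_filter_lt a ha
  -- rank bound for nonmax positions
  have hrank : ∀ i : Fin m, i ∉ T → (i : ℕ) - t ↑i < W.card := by
    intro i hiT
    have hsplit : T.card = t ↑i + (T.filter (fun j : Fin m => ¬ (j : ℕ) < ↑i)).card := by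
      rw [htdef]
      exact (Finset.card_filter_add_card_filter_not _).symm
    have hupper : (T.filter (fun j : Fin m => ¬ (j : ℕ) < ↑i)).card ≤ m - ↑i - 1 := by
      have : (T.filter (fun j : Fin m => ¬ (j : ℕ) < ↑i)).card ≤ (Finset.Ico ((i:ℕ)+1) m).card := by
        apply Finset.card_le_card_of_injOn Fin.val
        · intro x hx
          rw [Finset.mem_coe, Finset.mem_filter] at hx
          rw [Finset.mem_coe, Finset.mem_Ico]
          have hxi : x ≠ i := fun h => hiT (h ▸ hx.1)
          have : (x:ℕ) ≠ (i:ℕ) := fun h => hxi (Fin.ext h)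
          exact ⟨by omega, x.isLt⟩
        · intro x _ y _ h; exact Fin.ext h
      rw [Nat.card_Ico] at this
      omega
    rw [hWcard]
    have him : (i:ℕ) < m := i.isLt
    have hti : t ↑i ≤ (i:ℕ) := ht_le ↑i i.isLt.le
    omega
  -- strict monotonicity of ranks on nonmax positions
  have hrankmono : ∀ i j : Fin m, i ∉ T → (i:ℕ) < (j:ℕ) → (i:ℕ) - t ↑i < (j:ℕ) - t ↑j := by
    intro i j hiT hij
    have e1 : (T.filter (fun x : Fin m => (x:ℕ) < ↑j)).filter (fun x : Fin m => (x:ℕ) < ↑i)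
        = T.filter (fun x : Fin m => (x:ℕ) < ↑i) := by
      ext x
      simp only [Finset.mem_filter]
      constructor
      · rintro ⟨⟨h1, _⟩, h3⟩; exact ⟨h1, h3⟩
      · rintro ⟨h1, h3⟩; exact ⟨⟨h1, by omega⟩, h3⟩
    have hsplit := Finset.card_filter_add_card_filter_not
      (s := T.filter (fun x : Fin m => (x:ℕ) < ↑j)) (p := fun x : Fin m => (x:ℕ) < ↑i)
    rw [e1] at hsplit
    have hupper : ((T.filter (fun x : Fin m => (x:ℕ) < ↑j)).filter (fun x : Fin m => ¬ (x:ℕ) < ↑i)).card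
        ≤ (j:ℕ) - (i:ℕ) - 1 := by
      have hb : ((T.filter (fun x : Fin m => (x:ℕ) < ↑j)).filter (fun x : Fin m => ¬ (x:ℕ) < ↑i)).card
          ≤ (Finset.Ico ((i:ℕ)+1) (j:ℕ)).card := by
        apply Finset.card_le_card_of_injOn Fin.val
        · intro x hx
          simp only [Finset.mem_coe, Finset.mem_filter] at hx
          have hxi : x ≠ i := fun h => hiT (h ▸ hx.1.1)
          have : (x:ℕ) ≠ (i:ℕ) := fun h => hxi (Fin.ext h)
          rw [Finset.mem_coe, Finset.mem_Ico]
          exact ⟨by omega, hx.1.2⟩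
        · intro x _ y _ h; exact Fin.ext h
      rw [Nat.card_Ico] at hb
      omega
    have hti : t ↑i ≤ (i:ℕ) := ht_le ↑i i.isLt.le
    simp only [htdef] at *
    omega
  -- the permutation as a function
  set ψ : Fin W.card ≃o {x // x ∈ W} := W.orderIsoOfFin rfl with hψdef
  set π₀ : Fin m → Fin m := fun i =>
    if h : b ↑i < b (↑i+1) then mv i
    else (ψ ⟨(i:ℕ) - t ↑i, hrank i (by rw [hTdef]; simp [h])⟩ : Fin m) with hπ₀def
  -- membership facts
  have hπ₀T : ∀ i : Fin m, i ∈ T → π₀ i = mv i := by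
    intro i hi
    rw [hTdef, Finset.mem_filter] at hi
    rw [hπ₀def]
    simp only [dif_pos hi.2]
  have hπ₀P : ∀ i : Fin m, i ∉ T → π₀ i ∈ W := by
    intro i hi
    have h' : ¬ b ↑i < b (↑i+1) := by
      intro h''
      exact hi (by rw [hTdef]; simp [h''])
    rw [hπ₀def]
    simp only [dif_neg h']
    exact (ψ _).2
  have hπ₀Pval : ∀ (i : Fin m) (hiT : i ∉ T),
      π₀ i = (ψ ⟨(i:ℕ) - t ↑i, hrank i hiT⟩ : Fin m) := by
    intro i hiT
    have h' : ¬ b ↑i < b (↑i+1) := fun h'' => hiT (by rw [hTdef]; simp [h''])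
    rw [hπ₀def]
    simp only [dif_neg h']
  have hti_le : ∀ i : Fin m, t ↑i ≤ (i:ℕ) := fun i => ht_le ↑i i.isLt.le
  -- key: at nonmax positions the value is below b i
  have hkey : ∀ (i : Fin m) (hiT : i ∉ T), (π₀ i : ℕ) < b ↑i := by
    intro i hiT
    have h' : ¬ b ↑i < b (↑i+1) := fun h'' => hiT (by rw [hTdef]; simp [h''])
    have hbi1 : (i:ℕ) + 1 ≤ b ↑i := by
      have h1 := hge ((i:ℕ)+1) i.isLt
      have h2 : b ((i:ℕ)+1) ≤ b ↑i := by
        have h3 : ¬ b ↑i < b (↑i+1) := fun h'' => hiT (by rw [hTdef]; simp [h''])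
        omega
      omega
    by_contra hc
    push_neg at hc
    rw [hπ₀Pval i hiT] at hc
    -- count elements of W below b i
    have hVlow : (V.filter (fun x : Fin m => (x:ℕ) < b ↑i)).card = t ↑i := by
      have himg : V.filter (fun x : Fin m => (x:ℕ) < b ↑i)
          = (T.filter (fun x : Fin m => (x:ℕ) < ↑i)).image mv := by
        ext x
        constructor
        · intro hx
          obtain ⟨hxV, hlt⟩ := Finset.mem_filter.mp hx
          obtain ⟨j, hjT, rfl⟩ := Finset.mem_image.mp (by rwa [hVdef] at hxV)
          refine Finset.mem_image.mpr ⟨j, Finset.mem_filter.mpr ⟨hjT, ?_⟩, rfl⟩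
          have hjT' := (hmemT j).mp hjT
          have hmvval : (mv j : ℕ) = b (↑j+1) - 1 := rfl
          by_contra hge'
          push_neg at hge'
          have hmo : b ↑i ≤ b ↑j := hmono hge'
          omega
        · intro hx
          obtain ⟨j, hj, rfl⟩ := Finset.mem_image.mp hx
          obtain ⟨hjT, hji⟩ := Finset.mem_filter.mp hj
          have hjT' := (hmemT j).mp hjT
          have hmvval : (mv j : ℕ) = b (↑j+1) - 1 := rfl
          refine Finset.mem_filter.mpr ⟨by rw [hVdef]; exact Finset.mem_image_of_mem mv hjT, ?_⟩
          have hmo : b (↑j+1) ≤ b ↑i := hmono (by omega)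
          show (mv j : ℕ) < b ↑i
          omega
      rw [himg, Finset.card_image_of_injOn
        (fun x hx y hy hxy => hmvinj x (Finset.filter_subset _ _ (Finset.mem_coe.mp hx))
          y (Finset.filter_subset _ _ (Finset.mem_coe.mp hy)) hxy)]
    have hWlow : (W.filter (fun x : Fin m => (x:ℕ) < b ↑i)).card = b ↑i - t ↑i := by
      have hWV : W.filter (fun x : Fin m => (x:ℕ) < b ↑i)
          = (Finset.univ.filter (fun x : Fin m => (x:ℕ) < b ↑i))
              \ (V.filter (fun x : Fin m => (x:ℕ) < b ↑i)) := by
        ext x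
        simp only [hWdef, Finset.mem_filter, Finset.mem_sdiff, Finset.mem_compl,
          Finset.mem_univ, true_and]
        tauto
      rw [hWV, Finset.card_sdiff_of_subset (Finset.filter_subset_filter _ (Finset.subset_univ _)),
        card_filter_lt _ (hbm ↑i i.isLt.le), hVlow]
    -- compare with count below ψ r
    set r : Fin W.card := ⟨(i:ℕ) - t ↑i, hrank i hiT⟩ with hrdef
    have hsub2 : W.filter (fun x : Fin m => (x:ℕ) < b ↑i)
        ⊆ W.filter (fun x : Fin m => x < (W.orderIsoOfFin rfl r : Fin m)) := by
      intro x hx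
      rw [Finset.mem_filter] at hx ⊢
      refine ⟨hx.1, Fin.lt_def.mpr ?_⟩
      have : b ↑i ≤ ((W.orderIsoOfFin rfl r : Fin m) : ℕ) := hc
      omega
    have hc2 := Finset.card_le_card hsub2
    rw [hWlow, card_lt_iso W rfl r] at hc2
    have := hti_le i
    simp only [hrdef] at hc2
    omega
  -- injectivity
  have hinj : Function.Injective π₀ := by
    intro x y hxy
    by_cases hx : x ∈ T <;> by_cases hy : y ∈ T
    · exact hmvinj x hx y hy (by rw [← hπ₀T x hx, ← hπ₀T y hy]; exact hxy)
    · exfalso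
      have h1 : π₀ y ∈ W := hπ₀P y hy
      rw [← hxy, hπ₀T x hx] at h1
      rw [hWdef, Finset.mem_compl] at h1
      exact h1 (Finset.mem_image_of_mem mv hx)
    · exfalso
      have h1 : π₀ x ∈ W := hπ₀P x hx
      rw [hxy, hπ₀T y hy] at h1
      rw [hWdef, Finset.mem_compl] at h1
      exact h1 (Finset.mem_image_of_mem mv hy)
    · rw [hπ₀Pval x hx, hπ₀Pval y hy] at hxy
      have h2 : ((⟨(x:ℕ) - t ↑x, hrank x hx⟩ : Fin W.card)) = ⟨(y:ℕ) - t ↑y, hrank y hy⟩ :=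
        ψ.injective (Subtype.coe_injective hxy)
      have h3 : (x:ℕ) - t ↑x = (y:ℕ) - t ↑y := congrArg Fin.val h2
      rcases lt_trichotomy (x:ℕ) (y:ℕ) with h | h | h
      · exact absurd h3 (Nat.ne_of_lt (hrankmono x y hx h))
      · exact Fin.ext h
      · exact absurd h3.symm (Nat.ne_of_lt (hrankmono y x hy h))
  let π : Equiv.Perm (Fin m) := Equiv.ofBijective π₀ (Finite.injective_iff_bijective.mp hinj)
  have hπapp : ∀ x, π x = π₀ x := fun _ => rfl
  -- running max equals b
  have hMb : ∀ k, k ≤ m → Mfun π k = b k := by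
    intro k
    induction k with
    | zero => intro _; simp [h0]
    | succ k ih =>
      intro hk
      have hk' : k < m := hk
      rw [Mfun_succ π k hk', ih (le_of_lt hk')]
      have hπk : π ⟨k, hk'⟩ = π₀ ⟨k, hk'⟩ := rfl
      show max (b k) ((π ⟨k, hk'⟩ : ℕ) + 1) = b (k+1)
      by_cases hT : (⟨k, hk'⟩ : Fin m) ∈ T
      · have hval : π₀ ⟨k, hk'⟩ = mv ⟨k, hk'⟩ := hπ₀T _ hT
        have hbk : b k < b (k+1) := by
          have := (hmemT _).mp hT
          simpa using this
        have hmvval : (mv ⟨k, hk'⟩ : ℕ) = b (k+1) - 1 := rfl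
        rw [hπk, hval]
        rw [max_eq_right (by omega)]
        omega
      · have h1 : (π₀ ⟨k, hk'⟩ : ℕ) < b k := by
          have := hkey ⟨k, hk'⟩ hT
          simpa using this
        have hbeq : b (k+1) = b k := by
          have h2 : ¬ b k < b (k+1) := by
            intro h3
            apply hT
            rw [hmemT]
            simpa using h3
          have h4 : b k ≤ b (k+1) := hmono (by omega)
          omega
        rw [hπk, max_eq_left (by omega)]
        exact hbeq.symm
  -- 321-avoidance
  have hav : Avoids321 π := by
    rintro ⟨i, j, k, hij, hjk, h1, h2⟩
    have hnotT : ∀ p q : Fin m, p < q → π q < π p → q ∉ T := by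
      intro p q hpq hqp hqT
      have hb1 : (π p : ℕ) + 1 ≤ Mfun π (↑p+1) := by
        have := term_le_Mfun π (j := (p:ℕ)) (k := (p:ℕ)+1) (Nat.lt_succ_self _) p.isLt
        simpa using this
      have hb2 : Mfun π (↑p+1) ≤ Mfun π ↑q := Mfun_mono π (Fin.lt_def.mp hpq)
      rw [hMb ↑q q.isLt.le] at hb2
      have hq2 : b ↑q < b (↑q+1) := (hmemT q).mp hqT
      have hπq : (π q : ℕ) = b (↑q+1) - 1 := by
        rw [hπapp, hπ₀T q hqT]
      have hlt : (π q : ℕ) < (π p : ℕ) := Fin.lt_def.mp hqp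
      omega
    have hjP : j ∉ T := hnotT i j hij h2
    have hkP : k ∉ T := hnotT j k hjk h1
    have hr := hrankmono j k hjP (Fin.lt_def.mp hjk)
    have hπj : π j = (ψ ⟨(j:ℕ) - t ↑j, hrank j hjP⟩ : Fin m) := by
      rw [hπapp]; exact hπ₀Pval j hjP
    have hπk : π k = (ψ ⟨(k:ℕ) - t ↑k, hrank k hkP⟩ : Fin m) := by
      rw [hπapp]; exact hπ₀Pval k hkP
    have hmono2 : π j < π k := by
      rw [hπj, hπk]
      exact Subtype.coe_lt_coe.mpr (ψ.strictMono (Fin.lt_def.mpr hr))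
    exact absurd (h1.trans hmono2) (lt_irrefl _)
  exact ⟨π, hav, hMb⟩

end Construction


def cmap (π : Equiv.Perm (Fin m)) : List ℕ :=
  List.ofFn (fun i : Fin m => Mfun π (↑i+1) - Mfun π ↑i)

@[simp] lemma length_cmap (π : Equiv.Perm (Fin m)) : (cmap π).length = m := by
  simp [cmap]

lemma getD_cmap (π : Equiv.Perm (Fin m)) (j : ℕ) (hj : j < m) :
    (cmap π).getD j 0 = Mfun π (j+1) - Mfun π j := by
  rw [List.getD_eq_getElem _ _ (by simp [hj])]
  simp [cmap]

lemma sum_take_cmap (π : Equiv.Perm (Fin m)) : ∀ k, k ≤ m → ((cmap π).take k).sum = Mfun π k := by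
  intro k
  induction k with
  | zero => intro _; simp
  | succ k ih =>
    intro hk
    have hk' : k < m := hk
    show ((cmap π).take (k+1)).sum = Mfun π (k+1)
    rw [take_sum_succ _ k (by simp [hk']), ih (le_of_lt hk'), getD_cmap π k hk']
    have := Mfun_mono π (show k ≤ k+1 by omega)
    omega

lemma sum_cmap (π : Equiv.Perm (Fin m)) : (cmap π).sum = m := by
  have h1 : (cmap π).take m = cmap π := List.take_of_length_le (by simp)
  have := sum_take_cmap π m le_rfl
  rw [h1] at this
  rw [this, Mfun_top]

lemma Mfun_stable (π : Equiv.Perm (Fin m)) (k : ℕ) (hk : m ≤ k) : Mfun π k = Mfun π m := by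
  apply _root_.le_antisymm
  · apply Finset.sup_le
    intro j hj
    by_cases hjm : j < m
    · rw [dif_pos hjm]
      exact term_le_Mfun π (k := m) hjm hjm
    · rw [dif_neg hjm]
      exact Nat.zero_le _
  · exact Mfun_mono π hk

lemma statSum_cmap (π : Equiv.Perm (Fin m)) (hav : Avoids321 π) :
    statSum (cmap π) = inversions π := by
  rw [inversions_eq π hav, statSum]
  rw [Finset.sum_filter, Finset.sum_filter]
  simp only [length_cmap]
  rw [← Fin.sum_univ_eq_sum_range
    (f := fun j => if (cmap π).getD j 0 ≠ 0 then ((cmap π).take (j+1)).sum - (j+1) else 0) m]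
  · apply Finset.sum_congr (by simp)
    intro i _
    have h1 := getD_cmap π ↑i i.isLt
    have h2 := sum_take_cmap π (↑i+1) i.isLt
    have h3 := Mfun_mono π (Nat.le_succ (i:ℕ))
    by_cases hc : Mfun π ↑i < Mfun π (↑i+1)
    · rw [if_pos (by omega), if_pos hc, h2]
    · rw [if_neg (by omega), if_neg hc]

lemma cmap_mem (π : Equiv.Perm (Fin m)) :
    (cmap π).length = m ∧ (cmap π).sum = m ∧ ∀ i ≤ m, i ≤ ((cmap π).take i).sum := by
  refine ⟨by simp, sum_cmap π, ?_⟩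
  intro i hi
  rw [sum_take_cmap π i hi]
  exact le_Mfun π i hi

lemma cmap_inj (π σ : Equiv.Perm (Fin m)) (hπ : Avoids321 π) (hσ : Avoids321 σ)
    (h : cmap π = cmap σ) : π = σ := by
  apply perm_eq_of_Mfun_eq π σ hπ hσ
  intro k
  rcases le_or_gt k m with hk | hk
  · rw [← sum_take_cmap π k hk, ← sum_take_cmap σ k hk, h]
  · rw [Mfun_stable π k hk.le, Mfun_stable σ k hk.le,
      ← sum_take_cmap π m le_rfl, ← sum_take_cmap σ m le_rfl, h]

lemma cmap_surj (c : List ℕ) (hlen : c.length = m) (hsum : c.sum = m)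
    (hpre : ∀ i ≤ m, i ≤ (c.take i).sum) :
    ∃ π : Equiv.Perm (Fin m), Avoids321 π ∧ cmap π = c := by
  have htake : c.take m = c := List.take_of_length_le (by omega)
  obtain ⟨π, hav, hM⟩ := exists_perm (b := fun k => (c.take k).sum)
    (fun a b hab => sum_take_mono c hab) (by simp)
    (fun k hk => hpre k hk) (by show (c.take m).sum = m; rw [htake, hsum])
  refine ⟨π, hav, ?_⟩
  apply List.ext_getElem (by simp [hlen])
  intro j h1 h2
  have hjm : j < m := by simpa using h1
  rw [← List.getD_eq_getElem (cmap π) 0 h1, ← List.getD_eq_getElem c 0 h2,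
    getD_cmap π j hjm, hM (j+1) hjm, hM j hjm.le]
  have := take_sum_succ c j h2
  have := sum_take_mono c (Nat.le_succ j)
  omega


lemma dyck_getLast (m : ℕ) (hm : 0 < m) (w : List Bool) (hw : IsDyck m w) :
    w.getLast? = some false := by
  obtain ⟨hlen, hb, hc⟩ := hw
  rcases List.eq_nil_or_concat w with rfl | ⟨u, x, rfl⟩
  · simp at hlen; omega
  · simp only [List.concat_eq_append] at hlen hb hc ⊢
    rw [List.getLast?_concat]
    cases x
    · rfl
    · exfalso
      have h1 := hb u.length
      rw [List.take_left' rfl] at h1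
      have h2 : (u ++ [true]).count false = u.count false := by
        simp [List.count_append]
      have h3 : (u ++ [true]).count true = u.count true + 1 := by
        simp [List.count_append]
      omega

theorem stmt_10 (n d : ℕ) :
    {π : Equiv.Perm (Fin (n + 1)) | Avoids321 π ∧ inversions π = d}.ncard =
      {w : List Bool | IsDyck (n + 1) w ∧ dstat w = d}.ncard := by
  classical
  set m := n + 1 with hm
  set C : Set (List ℕ) :=
    {c | c.length = m ∧ c.sum = m ∧ (∀ i ≤ m, i ≤ (c.take i).sum) ∧ statSum c = d} with hC
  have h1 : {π : Equiv.Perm (Fin m) | Avoids321 π ∧ inversions π = d}.ncard = C.ncard := by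
    have hbij : Set.BijOn cmap {π : Equiv.Perm (Fin m) | Avoids321 π ∧ inversions π = d} C := by
      refine ⟨?_, ?_, ?_⟩
      · rintro π ⟨hav, hinv⟩
        obtain ⟨hl, hs, hp⟩ := cmap_mem π
        exact ⟨hl, hs, hp, by rw [statSum_cmap π hav, hinv]⟩
      · rintro π ⟨havπ, _⟩ σ ⟨havσ, _⟩ h
        exact cmap_inj π σ havπ havσ h
      · rintro c ⟨hl, hs, hp, hstat⟩
        obtain ⟨π, hav, hc⟩ := cmap_surj c hl hs hp
        refine ⟨π, ⟨hav, ?_⟩, hc⟩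
        rw [← statSum_cmap π hav, hc, hstat]
    rw [← hbij.image_eq, Set.ncard_image_of_injOn hbij.injOn]
  have h2 : {w : List Bool | IsDyck m w ∧ dstat w = d}.ncard = C.ncard := by
    have hbij : Set.BijOn encode C {w : List Bool | IsDyck m w ∧ dstat w = d} := by
      refine ⟨?_, ?_, ?_⟩
      · rintro c ⟨hl, hs, hp, hstat⟩
        refine ⟨⟨by simp [hl, hs]; ring, ?_, by simp [hl, hs]⟩, by rw [dstat_encode, hstat]⟩
        intro k
        have hball := ballot_of c 0 (by
          intro i hi
          have := hp i (by omega)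
          omega) k
        omega
      · intro c₁ _ c₂ _ h
        have hd := decode_encode c₁
        rw [h, decode_encode] at hd
        exact hd.symm
      · rintro w ⟨hdy, hstat⟩
        have hlast : w.getLast? = some false := dyck_getLast m (by omega) w hdy
        have henc := encode_decode w hlast
        set c := decode w with hcdef
        have hcf : w.count false = c.length := by rw [← henc]; simp
        have hct : w.count true = c.sum := by rw [← henc]; simp
        have hlen2 : w.length = 2*m := hdy.1
        have hwl : w.length = c.sum + c.length := by rw [← henc]; simp
        have heq := hdy.2.2
        have hcl : c.length = m := by omega
        have hcs : c.sum = m := by omega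
        refine ⟨c, ⟨hcl, hcs, ?_, ?_⟩, henc⟩
        · intro i hi
          apply prefix_ge_of_ballot c ?_ i (by omega)
          intro k
          rw [henc]
          exact hdy.2.1 k
        · rw [← hstat, ← henc, dstat_encode]
    rw [← hbij.image_eq, Set.ncard_image_of_injOn hbij.injOn]
  rw [h1, h2]
end

section
/- Every nonzero monomial in the generators of the nil-Temperley-Lieb algebra of $P_n$ is equal (as an algebra element) to a monomial that is a concatenation of decreasing runs $x_{p_1}x_{p_1-1}\cdots x_{v_1}\, x_{p_2}\cdots x_{v_2}\, \cdots\, x_{p_k}\cdots x_{v_k}$ with $p_1 < p_2 < \cdots < p_k$ and $v_1 < v_2 < \cdots < v_k$, where each run has consecutively decreasing indices. -/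
open FreeAlgebra in
/-- The relations of the nil-Temperley-Lieb algebra of the path `Pₙ`,
with generators indexed by `Fin n` (vertex `i+1` of the path ↔ `i : Fin n`). -/
inductive NTLRel (n : ℕ) : FreeAlgebra ℚ (Fin n) → FreeAlgebra ℚ (Fin n) → Prop
  | sq (i : Fin n) : NTLRel n (ι ℚ i * ι ℚ i) 0
  | comm (i j : Fin n) (h : (i : ℕ) + 1 < j ∨ (j : ℕ) + 1 < i) :
      NTLRel n (ι ℚ i * ι ℚ j) (ι ℚ j * ι ℚ i)
  | updown (i j : Fin n) (h : (j : ℕ) = i + 1) :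
      NTLRel n (ι ℚ i * ι ℚ j * ι ℚ i) 0
  | downup (i j : Fin n) (h : (j : ℕ) = i + 1) :
      NTLRel n (ι ℚ j * ι ℚ i * ι ℚ j) 0

/-- The nil-Temperley-Lieb algebra of the path `Pₙ`. -/
def NTL (n : ℕ) : Type := RingQuot (NTLRel n)

noncomputable instance (n : ℕ) : Ring (NTL n) := by unfold NTL; infer_instance
noncomputable instance (n : ℕ) : Algebra ℚ (NTL n) := by unfold NTL; infer_instance

/-- The generator `x_{i+1}` of the nil-Temperley-Lieb algebra. -/
noncomputable def X {n : ℕ} (i : Fin n) : NTL n :=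
  RingQuot.mkAlgHom ℚ (NTLRel n) (FreeAlgebra.ι ℚ i)

lemma Xsq {n : ℕ} (i : Fin n) : X i * X i = 0 := by
  have := RingQuot.mkAlgHom_rel ℚ (NTLRel.sq (n := n) i)
  simp only [map_mul, map_zero] at this
  exact this

lemma Xcomm {n : ℕ} (i j : Fin n) (h : (i : ℕ) + 1 < j ∨ (j : ℕ) + 1 < i) :
    X i * X j = X j * X i := by
  have := RingQuot.mkAlgHom_rel ℚ (NTLRel.comm (n := n) i j h)
  simp only [map_mul] at this
  exact this

lemma Xupdown {n : ℕ} (i j : Fin n) (h : (j : ℕ) = i + 1) :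
    X i * X j * X i = 0 := by
  have := RingQuot.mkAlgHom_rel ℚ (NTLRel.updown (n := n) i j h)
  simp only [map_mul, map_zero] at this
  exact this

lemma Xdownup {n : ℕ} (i j : Fin n) (h : (j : ℕ) = i + 1) :
    X j * X i * X j = 0 := by
  have := RingQuot.mkAlgHom_rel ℚ (NTLRel.downup (n := n) i j h)
  simp only [map_mul, map_zero] at this
  exact this

/-- The run with 1-based peak `p` and length `ℓ`, as a list of `Fin n`
(0-based indices `p-1, p-2, ..., p-ℓ`). -/
def frun (n : ℕ) : ℕ → ℕ → List (Fin n)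
  | _, 0 => []
  | p, (ℓ+1) => (if h : p - 1 < n then [⟨p-1, h⟩] else []) ++ frun n (p-1) ℓ

lemma frun_cons (n p ℓ : ℕ) (h1 : 1 ≤ p) (h2 : p ≤ n) :
    frun n p (ℓ+1) = ⟨p-1, by omega⟩ :: frun n (p-1) ℓ := by
  rw [frun, dif_pos (by omega)]; rfl

lemma frun_mem (n : ℕ) : ∀ p ℓ, ∀ j ∈ frun n p ℓ, (j : ℕ) ≤ p - 1 := by
  intro p ℓ
  induction ℓ generalizing p with
  | zero => simp [frun]
  | succ ℓ ih =>
    intro j hj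
    rw [frun] at hj
    rcases List.mem_append.1 hj with hj | hj
    · rcases Nat.lt_or_ge (p-1) n with h | h
      · rw [dif_pos h] at hj; simp at hj; subst hj; simp
      · rw [dif_neg (by omega)] at hj; simp at hj
    · have := ih (p-1) j hj; omega


lemma frun_map_val (n : ℕ) : ∀ p ℓ, ℓ ≤ p → p ≤ n →
    (frun n p ℓ).map (fun i : Fin n => (i : ℕ) + 1) = (List.range ℓ).map (fun t => p - t) := by
  intro p ℓ
  induction ℓ generalizing p with
  | zero => simp [frun]
  | succ ℓ ih =>
    intro h1 h2
    rw [frun_cons n p ℓ (by omega) h2, List.range_succ_eq_map]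
    simp only [List.map_cons, List.map_map]
    rw [ih (p-1) (by omega) (by omega)]
    congr 1
    · omega
    · apply List.map_congr_left; intro t _; simp; omega

lemma comm_prod {n : ℕ} (i : Fin n) (M : List (Fin n))
    (h : ∀ m ∈ M, (m : ℕ) + 1 < i) : X i * (M.map X).prod = (M.map X).prod * X i := by
  induction M with
  | nil => simp
  | cons m M ih =>
    simp only [List.map_cons, List.prod_cons]
    have hc : X i * X m = X m * X i :=
      Xcomm i m (Or.inr (h m List.mem_cons_self))
    rw [← mul_assoc, hc, mul_assoc, ih (fun x hx => h x (List.mem_cons_of_mem m hx)),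
      ← mul_assoc]

/-- Left-absorption: `x_a · (x_p x_{p-1} ⋯ x_v) = 0` when `v ≤ a ≤ p` (1-based). -/
lemma zero_left {n : ℕ} (i : Fin n) : ∀ ℓ p, 1 ≤ ℓ → ℓ ≤ p → p ≤ n →
    p - ℓ ≤ (i : ℕ) → (i : ℕ) + 1 ≤ p →
    X i * ((frun n p ℓ).map X).prod = 0 := by
  intro ℓ
  induction ℓ with
  | zero => omega
  | succ ℓ ih =>
    intro p h1 h2 h3 h4 h5
    rw [frun_cons n p ℓ (by omega) h3]
    simp only [List.map_cons, List.prod_cons]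
    by_cases hip : (i : ℕ) = p - 1
    · have : (⟨p-1, by omega⟩ : Fin n) = i := by ext; simp [hip]
      rw [this, ← mul_assoc, Xsq, zero_mul]
    · -- i + 1 ≤ p - 1
      have hlt : (i : ℕ) + 1 ≤ p - 1 := by omega
      by_cases hadj : (i : ℕ) + 2 = p
      · -- adjacent: i+1 = p-1, use updown
        have hℓ : 1 ≤ ℓ := by omega
        obtain ⟨ℓ', rfl⟩ : ∃ ℓ', ℓ = ℓ' + 1 := ⟨ℓ - 1, by omega⟩
        rw [frun_cons n (p-1) ℓ' (by omega) (by omega)]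
        simp only [List.map_cons, List.prod_cons]
        have e1 : (⟨p-1-1, by omega⟩ : Fin n) = i := by ext; simp; omega
        rw [e1, ← mul_assoc, ← mul_assoc]
        rw [Xupdown i ⟨p-1, by omega⟩ (by simp; omega)]
        simp
      · -- far: commute past head
        have hc : X i * X ⟨p-1, by omega⟩ = X ⟨p-1, by omega⟩ * X i :=
          Xcomm i ⟨p-1, by omega⟩ (Or.inl (by simp; omega))
        rw [← mul_assoc, hc, mul_assoc, ih (p-1) (by omega) (by omega) (by omega)
          (by omega) (by omega), mul_zero]

/-- Sandwich: `x_a · (x_{a-1} ⋯ x_w) · x_a = 0` (1-based `a = i+1`). -/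
lemma sandwich {n : ℕ} (i : Fin n) (ℓ : ℕ) (h1 : 1 ≤ ℓ) (h2 : ℓ ≤ (i : ℕ)) :
    X i * ((frun n (i : ℕ) ℓ).map X).prod * X i = 0 := by
  obtain ⟨ℓ', rfl⟩ : ∃ ℓ', ℓ = ℓ' + 1 := ⟨ℓ - 1, by omega⟩
  rw [frun_cons n (i : ℕ) ℓ' (by omega) (by omega)]
  simp only [List.map_cons, List.prod_cons]
  set j : Fin n := ⟨(i : ℕ) - 1, by omega⟩ with hj
  have hcomm : X i * ((frun n ((i : ℕ)-1) ℓ').map X).prod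
      = ((frun n ((i : ℕ)-1) ℓ').map X).prod * X i := by
    apply comm_prod
    intro m hm
    rcases Nat.eq_zero_or_pos ℓ' with rfl | hp
    · simp [frun] at hm
    · have := frun_mem n ((i : ℕ)-1) ℓ' m hm
      omega
  have hdu : X i * X j * X i = 0 := Xdownup j i (by simp [hj]; omega)
  calc X i * (X j * ((frun n ((i : ℕ)-1) ℓ').map X).prod) * X i
      = X i * X j * (((frun n ((i : ℕ)-1) ℓ').map X).prod * X i) := by
        simp [mul_assoc]
    _ = X i * X j * (X i * ((frun n ((i : ℕ)-1) ℓ').map X).prod) := by rw [hcomm]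
    _ = (X i * X j * X i) * ((frun n ((i : ℕ)-1) ℓ').map X).prod := by simp [mul_assoc]
    _ = 0 := by rw [hdu, zero_mul]

/-- The word (list of generators) of a run encoding. -/
def wordF (n : ℕ) (s : List (ℕ × ℕ)) : List (Fin n) :=
  s.flatMap (fun pr => frun n pr.1 pr.2)

lemma wordF_nil (n : ℕ) : wordF n [] = [] := rfl

lemma wordF_cons (n : ℕ) (pr : ℕ × ℕ) (t : List (ℕ × ℕ)) :
    wordF n (pr :: t) = frun n pr.1 pr.2 ++ wordF n t := List.flatMap_cons ..

lemma RunEnc_tail {n : ℕ} {pr : ℕ × ℕ} {s : List (ℕ × ℕ)} (h : RunEnc n (pr :: s)) :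
    RunEnc n s := by
  obtain ⟨h1, h2, h3⟩ := h
  exact ⟨fun q hq => h1 q (List.mem_cons_of_mem _ hq),
    (by simpa [List.Chain'] using h2.tail), (by simpa [List.Chain'] using h3.tail)⟩

lemma head_opt {α β : Type*} (f : α → β) (o : Option α) (y : β) (hy : y ∈ o.map f) :
    ∃ q ∈ o, f q = y := by cases o <;> simp_all

lemma mem_some {α : Type*} {q b : α} (hq : q ∈ some b) : q = b :=
  (Option.mem_some_iff.1 hq).symm

lemma insert_lem {n : ℕ} (i : Fin n) :
    ∀ s : List (ℕ × ℕ), RunEnc n s →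
    X i * ((wordF n s).map X).prod = 0 ∨
    ∃ s' : List (ℕ × ℕ), RunEnc n s' ∧
      ((wordF n s').map X).prod = X i * ((wordF n s).map X).prod ∧
      (∀ pr ∈ s'.head?, (pr.1 = (i : ℕ) + 1 ∨ ∃ q ∈ s.head?, pr.1 = q.1) ∧
        (pr.1 - pr.2 = (i : ℕ) ∨ ∃ q ∈ s.head?, pr.1 - pr.2 = q.1 - q.2)) := by
  intro s
  induction s with
  | nil =>
    intro _
    right
    refine ⟨[((i : ℕ) + 1, 1)], ⟨by simp, by simp [List.Chain'], by simp [List.Chain']⟩, ?_, ?_⟩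
    · have : frun n ((i : ℕ) + 1) 1 = [i] := by
        rw [frun_cons n _ 0 (by omega) (by omega)]
        simp [frun]
      simp [wordF_nil, wordF_cons, this]
    · simp
  | cons pr t ih =>
    intro h
    obtain ⟨p, ℓ⟩ := pr
    have hb : 1 ≤ ℓ ∧ ℓ ≤ p ∧ p ≤ n := h.1 (p, ℓ) List.mem_cons_self
    have hpk : ∀ q ∈ t.head?, p < q.1 := by
      intro q hq
      have h2 := h.2.1
      rw [List.map_cons, List.Chain', List.isChain_cons] at h2
      exact h2.1 q.1 (by rw [List.head?_map, hq]; rfl)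
    have hvl : ∀ q ∈ t.head?, p - ℓ < q.1 - q.2 := by
      intro q hq
      have h3 := h.2.2
      rw [List.map_cons, List.Chain', List.isChain_cons] at h3
      exact h3.1 (q.1 - q.2) (by rw [List.head?_map, hq]; rfl)
    have hword : ((wordF n ((p, ℓ) :: t)).map X).prod
        = ((frun n p ℓ).map X).prod * ((wordF n t).map X).prod := by
      rw [wordF_cons]; simp [List.map_append, List.prod_append]
    by_cases hA : (i : ℕ) + 1 ≤ p - ℓ
    · -- new singleton run in front
      right
      refine ⟨((i : ℕ) + 1, 1) :: (p, ℓ) :: t, ?_, ?_, ?_⟩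
      · refine ⟨?_, ?_, ?_⟩
        · intro q hq
          rcases List.mem_cons.1 hq with rfl | hq
          · simp
          · exact h.1 q hq
        · rw [List.map_cons]
          rw [List.Chain', List.isChain_cons]
          refine ⟨?_, h.2.1⟩
          intro y hy
          rw [List.head?_map] at hy
          obtain ⟨q, hq, rfl⟩ := head_opt _ _ _ hy
          have := mem_some hq
          subst this
          simp
          omega
        · rw [List.map_cons, List.Chain', List.isChain_cons]
          refine ⟨?_, h.2.2⟩
          intro y hy
          rw [List.head?_map] at hy
          obtain ⟨q, hq, rfl⟩ := head_opt _ _ _ hy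
          have := mem_some hq
          subst this
          simp
          omega
      · have : frun n ((i : ℕ) + 1) 1 = [i] := by
          rw [frun_cons n _ 0 (by omega) (by omega)]; simp [frun]
        rw [wordF_cons]
        simp only [this]
        simp [List.prod_cons]
      · simp
    · by_cases hB : (i : ℕ) + 1 ≤ p
      · -- absorbed into the first run: zero
        left
        rw [hword, ← mul_assoc,
          zero_left i ℓ p hb.1 hb.2.1 hb.2.2 (by omega) (by omega), zero_mul]
      · by_cases hC : (i : ℕ) = p
        · -- extend the first run, or collide with second peak
          by_cases hC2 : ∃ q ∈ t.head?, q.1 = (i : ℕ) + 1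
          · -- collision: zero via sandwich
            left
            obtain ⟨q', hq', hq1'⟩ := hC2
            cases t with
            | nil => simp at hq'
            | cons q t' =>
              have hqq : q' = q := mem_some hq'
              subst hqq
              have hq1 : q'.1 = (i : ℕ) + 1 := hq1'
              have hqb : 1 ≤ q'.2 ∧ q'.2 ≤ q'.1 ∧ q'.1 ≤ n :=
                h.1 q' (List.mem_cons_of_mem _ List.mem_cons_self)
              obtain ⟨ℓ2, hℓ2⟩ : ∃ ℓ2, q'.2 = ℓ2 + 1 := ⟨q'.2 - 1, by omega⟩
              have hq2 : frun n q'.1 q'.2 = i :: frun n (q'.1 - 1) ℓ2 := by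
                rw [hℓ2, frun_cons n q'.1 ℓ2 (by omega) hqb.2.2]
                congr 1
                ext
                simp
                omega
              rw [hword, wordF_cons, hq2]
              simp only [List.map_append, List.prod_append, List.map_cons, List.prod_cons]
              have hsand : X i * ((frun n p ℓ).map X).prod * X i = 0 := by
                have := sandwich i ℓ hb.1 (by omega)
                rwa [hC] at this
              simp only [← mul_assoc]
              rw [hsand, zero_mul, zero_mul]
          · -- extend the run
            right
            refine ⟨((i : ℕ) + 1, ℓ + 1) :: t, ?_, ?_, ?_⟩
            · refine ⟨?_, ?_, ?_⟩
              · intro q hq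
                rcases List.mem_cons.1 hq with rfl | hq
                · simp; omega
                · exact h.1 q (List.mem_cons_of_mem _ hq)
              · rw [List.map_cons, List.Chain', List.isChain_cons]
                constructor
                · intro y hy
                  rw [List.head?_map] at hy
                  obtain ⟨q, hq, rfl⟩ := head_opt _ _ _ hy
                  have h1 := hpk q hq
                  have hne : q.1 ≠ (i : ℕ) + 1 := fun hh => hC2 ⟨q, hq, hh⟩
                  omega
                · have h2 := h.2.1
                  rw [List.map_cons, List.Chain', List.isChain_cons] at h2
                  exact h2.2
              · rw [List.map_cons, List.Chain', List.isChain_cons]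
                constructor
                · intro y hy
                  rw [List.head?_map] at hy
                  obtain ⟨q, hq, rfl⟩ := head_opt _ _ _ hy
                  have h1 := hvl q hq
                  simp only
                  omega
                · have h3 := h.2.2
                  rw [List.map_cons, List.Chain', List.isChain_cons] at h3
                  exact h3.2
            · rw [hword, wordF_cons]
              have e1 : ((i : ℕ) + 1) - 1 = p := by omega
              have hq2 : frun n ((i : ℕ) + 1) (ℓ + 1) = i :: frun n p ℓ := by
                rw [frun_cons n _ ℓ (by omega) (by omega)]
                simp only [e1]
                congr 1
                ext
                simp
                omega
              simp only [hq2]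
              simp [List.map_append, List.prod_append, List.prod_cons, mul_assoc]
            · intro q hq
              have := mem_some hq
              subst this
              refine ⟨Or.inl rfl, Or.inr ⟨(p, ℓ), rfl, by simp; omega⟩⟩
        · -- i ≥ p + 1: commute past the first run and recurse
          have hD : p + 1 ≤ (i : ℕ) := by omega
          have hcomm : X i * ((frun n p ℓ).map X).prod
              = ((frun n p ℓ).map X).prod * X i := by
            apply comm_prod
            intro m hm
            have := frun_mem n p ℓ m hm
            omega
          have hsplit : X i * ((wordF n ((p, ℓ) :: t)).map X).prod
              = ((frun n p ℓ).map X).prod * (X i * ((wordF n t).map X).prod) := by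
            rw [hword, ← mul_assoc, hcomm, mul_assoc]
          rcases ih (RunEnc_tail h) with h0 | ⟨s'', henc, hprod, hhead⟩
          · left
            rw [hsplit, h0, mul_zero]
          · right
            refine ⟨(p, ℓ) :: s'', ?_, ?_, ?_⟩
            · refine ⟨?_, ?_, ?_⟩
              · intro q hq
                rcases List.mem_cons.1 hq with rfl | hq
                · exact hb
                · exact henc.1 q hq
              · rw [List.map_cons, List.Chain', List.isChain_cons]
                refine ⟨?_, henc.2.1⟩
                intro y hy
                rw [List.head?_map] at hy
                obtain ⟨q0, hq0, rfl⟩ := head_opt _ _ _ hy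
                have hh := (hhead q0 hq0).1
                rcases hh with h1 | ⟨q, hq, h1⟩
                · omega
                · have := hpk q hq
                  omega
              · rw [List.map_cons, List.Chain', List.isChain_cons]
                refine ⟨?_, henc.2.2⟩
                intro y hy
                rw [List.head?_map] at hy
                obtain ⟨q0, hq0, rfl⟩ := head_opt _ _ _ hy
                have hh := (hhead q0 hq0).2
                rcases hh with h1 | ⟨q, hq, h1⟩
                · omega
                · have := hvl q hq
                  omega
            · rw [hsplit, ← hprod, wordF_cons]
              simp [List.map_append, List.prod_append]
            · intro q hq
              have := mem_some hq
              subst this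
              exact ⟨Or.inr ⟨(p, ℓ), rfl, rfl⟩, Or.inr ⟨(p, ℓ), rfl, rfl⟩⟩

lemma wordF_map_val {n : ℕ} (s : List (ℕ × ℕ))
    (hb : ∀ pr ∈ s, 1 ≤ pr.2 ∧ pr.2 ≤ pr.1 ∧ pr.1 ≤ n) :
    (wordF n s).map (fun i : Fin n => (i : ℕ) + 1) =
      (s.map fun pr => (List.range pr.2).map fun t => pr.1 - t).flatten := by
  induction s with
  | nil => simp [wordF_nil]
  | cons pr t ih =>
    have hp := hb pr List.mem_cons_self
    rw [wordF_cons, List.map_append, List.map_cons, List.flatten_cons,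
      ih (fun q hq => hb q (List.mem_cons_of_mem _ hq)),
      frun_map_val n pr.1 pr.2 hp.2.1 hp.2.2]

lemma main_aux {n : ℕ} (L : List (Fin n)) (h : (L.map X).prod ≠ 0) :
    ∃ s : List (ℕ × ℕ), RunEnc n s ∧ (L.map X).prod = ((wordF n s).map X).prod := by
  induction L with
  | nil => exact ⟨[], ⟨by simp, by simp [List.Chain'], by simp [List.Chain']⟩, by simp [wordF_nil]⟩
  | cons i T ih =>
    have hT : (T.map X).prod ≠ 0 := by
      intro h0
      apply h
      simp [List.prod_cons, h0]
    obtain ⟨s, hs, he⟩ := ih hT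
    rcases insert_lem i s hs with h0 | ⟨s', hs', hp, _⟩
    · exfalso
      apply h
      simp only [List.map_cons, List.prod_cons, he]
      exact h0
    · exact ⟨s', hs', by simp only [List.map_cons, List.prod_cons, he, ← hp]⟩


/-- Every nonzero monomial equals one given by a concatenation of decreasing
runs `x_{p}⋯x_{v}` (indices decreasing by one) with strictly increasing peaks
and strictly increasing valleys. -/
theorem stmt_16 (n : ℕ) (L : List (Fin n)) (h : (L.map X).prod ≠ 0) :
    ∃ L' : List (Fin n), (L.map X).prod = (L'.map X).prod ∧
      ∃ s : List (ℕ × ℕ), RunEnc n s ∧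
        L'.map (fun i => (i : ℕ) + 1) =
          (s.map fun pr => (List.range pr.2).map fun t => pr.1 - t).flatten := by
  obtain ⟨s, hs, he⟩ := main_aux L h
  refine ⟨wordF n s, he, s, hs, ?_⟩
  have hv := wordF_map_val s hs.1
  have e : (do let a ← wordF n s; pure (↑a : ℕ) : List ℕ)
      = (wordF n s).map (fun a : Fin n => (a : ℕ)) := by
    induction wordF n s with
    | nil => rfl
    | cons a l ih => simp_all
  rw [e, List.map_map]
  exact hv
end
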